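/- arXiv:1810.05549 — 4 statements merged into one kernel-verified Lean document; each statement's English description precedes it below -/
import Mathlib

section
/- Let h : U × E₁ → F₁ be smooth with U ⊆ E₀ open and each h_x := h(x,·) : E₁ → F₁ linear and invertible. If g : U × F₁ → E₁, (x,v) ↦ h_x⁻¹(v), is continuous, then g is smooth, and its partial derivative in the first variable satisfies d₁g(x,v)(u) = -g(x, d₁h(x, g(x,v))(u)) for x ∈ U, v ∈ F₁, u ∈ E₀. -/
open Filter Topology

structure TVS : Type 1 where
  carrier : Type
  grp : AddCommGroup carrier
  mod : Module ℝ carrier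
  top : TopologicalSpace carrier

attribute [instance] TVS.grp TVS.mod TVS.top

def TVS.ofType (X : Type) [g : AddCommGroup X] [m : Module ℝ X] [t : TopologicalSpace X] :
    TVS := ⟨X, g, m, t⟩

noncomputable def TVS.ext1 (E : TVS) : TVS := TVS.ofType (E.carrier × E.carrier × ℝ)

/-- Michal–Bastiani `C^k` on `U`. -/
def IsCOn (F : Type) [AddCommGroup F] [Module ℝ F] [TopologicalSpace F] :
    (k : ℕ) → (E : TVS) → (E.carrier → F) → Set E.carrier → Prop
  | 0, _E, f, U => ContinuousOn f U
  | k+1, E, f, U =>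
      ∃ f1 : E.ext1.carrier → F,
        (∀ x v t, x ∈ U → x + t • v ∈ U → f (x + t • v) - f x = t • f1 (x, v, t)) ∧
        IsCOn F k E.ext1 f1 {p : E.carrier × E.carrier × ℝ | p.1 ∈ U ∧ p.1 + p.2.2 • p.2.1 ∈ U}

/-- Michal–Bastiani smoothness (`C^∞`) on `U`. -/
def IsSmoothOn (F : Type) [AddCommGroup F] [Module ℝ F] [TopologicalSpace F]
    (E : TVS) (f : E.carrier → F) (U : Set E.carrier) : Prop :=
  ∀ k, IsCOn F k E f U

/-- `y = df(x)(v)`, the directional derivative computed within `U`. -/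
def IsDirDerivOn {X Y : Type} [AddCommGroup X] [Module ℝ X] [TopologicalSpace X]
    [AddCommGroup Y] [Module ℝ Y] [TopologicalSpace Y]
    (U : Set X) (f : X → Y) (x v : X) (y : Y) : Prop :=
  Filter.Tendsto (fun t : ℝ => t⁻¹ • (f (x + t • v) - f x))
    (nhdsWithin (0 : ℝ) {t : ℝ | t ≠ 0 ∧ x + t • v ∈ U}) (nhds y)

/-!
Fix `x`, `v` and put `a = g (x, v)`. Writing `h^{[1]}` for the `f1` of `IsCOn` applied to `h`,
`h (x + t • u, a) - h (x, a) = t • w` with `w = h^{[1]} ((x, a), (u, 0), t)`, so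
`a = g (x + t • u, v + t • w)`, and linearity of `g (x + t • u, ·)` turns the difference quotient
of `g` into
`g^{[1]} ((x, v), (u, ν), t) = g (x + t • u, ν - h^{[1]} ((x, g (x, v)), (u, 0), t))`.
The right-hand side is built from `g`, `h^{[1]}` and linear operations, so `g ∈ C^k` and
`h ∈ C^{k+1}` give `g ∈ C^{k+1}`. For `ν = 0` and `t ≠ 0` the same identity says that the
difference quotient of `g` is `g` evaluated at `(x + t • u, -(difference quotient of h))`, so
continuity of `g` carries any limit `w` of the latter to the limit `-g (x, w)` of the former.
-/

open Set Function

section MichalBastiani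

variable {X Y F G : Type}
  [AddCommGroup X] [Module ℝ X] [TopologicalSpace X]
  [AddCommGroup Y] [Module ℝ Y] [TopologicalSpace Y]
  [AddCommGroup F] [Module ℝ F] [TopologicalSpace F]
  [AddCommGroup G] [Module ℝ G] [TopologicalSpace G]

def quotDomain (U : Set X) : Set (X × X × ℝ) :=
  {p | p.1 ∈ U ∧ p.1 + p.2.2 • p.2.1 ∈ U}

theorem isCOn_succ_iff {k : ℕ} {f : X → F} {U : Set X} :
    IsCOn F (k + 1) (TVS.ofType X) f U ↔
      ∃ f1 : X × X × ℝ → F,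
        (∀ x v t, x ∈ U → x + t • v ∈ U → f (x + t • v) - f x = t • f1 (x, v, t)) ∧
        IsCOn F k (TVS.ofType (X × X × ℝ)) f1 (quotDomain U) :=
  Iff.rfl

theorem IsCOn.continuousOn [IsTopologicalAddGroup X] [ContinuousAdd F] {k : ℕ} {f : X → F}
    {U : Set X} (hf : IsCOn F k (TVS.ofType X) f U) : ContinuousOn f U := by
  induction k generalizing X f U with
  | zero => exact hf
  | succ k ih =>
    obtain ⟨f1, hf1_quot, hf1⟩ := isCOn_succ_iff.mp hf
    intro x hx
    have hquot : ∀ y ∈ U, f y = f x + f1 (x, y - x, 1) := fun y hy => by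
      have := hf1_quot x (y - x) 1 hx (by simpa using hy)
      rwa [one_smul, one_smul, add_sub_cancel, sub_eq_iff_eq_add'] at this
    have hmaps : MapsTo (fun y => (x, y - x, (1 : ℝ))) U (quotDomain U) :=
      fun y hy => ⟨hx, by simpa using hy⟩
    have hcont : ContinuousWithinAt (fun y => f x + f1 (x, y - x, 1)) U x :=
      continuousWithinAt_const.add
        ((ih hf1 _ (hmaps hx)).comp (f := fun y => (x, y - x, (1 : ℝ))) (by fun_prop) hmaps)
    exact hcont.congr hquot (hquot x hx)

theorem IsCOn.of_succ [IsTopologicalAddGroup X] [ContinuousAdd F] {k : ℕ} {f : X → F}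
    {U : Set X} (hf : IsCOn F (k + 1) (TVS.ofType X) f U) : IsCOn F k (TVS.ofType X) f U := by
  induction k generalizing X f U with
  | zero => exact hf.continuousOn
  | succ k ih =>
    obtain ⟨f1, hf1_quot, hf1⟩ := isCOn_succ_iff.mp hf
    exact isCOn_succ_iff.mpr ⟨f1, hf1_quot, ih hf1⟩

theorem isCOn_of_isLinearMap {k : ℕ} {L : X → F} (hL : IsLinearMap ℝ L) (hc : Continuous L)
    (U : Set X) : IsCOn F k (TVS.ofType X) L U := by
  induction k generalizing X L U with
  | zero => exact hc.continuousOn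
  | succ k ih =>
    refine isCOn_succ_iff.mpr ⟨fun p => L p.2.1, fun x v t _ _ => ?_, ?_⟩
    · rw [hL.map_add, hL.map_smul, add_sub_cancel_left]
    · exact ih (L := fun p : X × X × ℝ => L p.2.1)
        ⟨fun _ _ => hL.map_add _ _, fun _ _ => hL.map_smul _ _⟩ (by fun_prop) _

theorem IsCOn.prodMk {k : ℕ} {f : X → F} {g : X → G} {U : Set X}
    (hf : IsCOn F k (TVS.ofType X) f U) (hg : IsCOn G k (TVS.ofType X) g U) :
    IsCOn (F × G) k (TVS.ofType X) (fun x => (f x, g x)) U := by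
  induction k generalizing X f g U with
  | zero => exact ContinuousOn.prodMk hf hg
  | succ k ih =>
    obtain ⟨f1, hf1_quot, hf1⟩ := isCOn_succ_iff.mp hf
    obtain ⟨g1, hg1_quot, hg1⟩ := isCOn_succ_iff.mp hg
    refine isCOn_succ_iff.mpr ⟨fun p => (f1 p, g1 p), fun x v t hx hxt => ?_, ih hf1 hg1⟩
    simp only [Prod.mk_sub_mk, Prod.smul_mk, hf1_quot x v t hx hxt, hg1_quot x v t hx hxt]

theorem IsCOn.add [ContinuousAdd F] {k : ℕ} {f g : X → F} {U : Set X}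
    (hf : IsCOn F k (TVS.ofType X) f U) (hg : IsCOn F k (TVS.ofType X) g U) :
    IsCOn F k (TVS.ofType X) (fun x => f x + g x) U := by
  induction k generalizing X f g U with
  | zero => exact ContinuousOn.add hf hg
  | succ k ih =>
    obtain ⟨f1, hf1_quot, hf1⟩ := isCOn_succ_iff.mp hf
    obtain ⟨g1, hg1_quot, hg1⟩ := isCOn_succ_iff.mp hg
    refine isCOn_succ_iff.mpr ⟨fun p => f1 p + g1 p, fun x v t hx hxt => ?_, ih hf1 hg1⟩
    rw [add_sub_add_comm, hf1_quot x v t hx hxt, hg1_quot x v t hx hxt, smul_add]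

theorem IsCOn.neg [ContinuousNeg F] {k : ℕ} {f : X → F} {U : Set X}
    (hf : IsCOn F k (TVS.ofType X) f U) : IsCOn F k (TVS.ofType X) (fun x => -f x) U := by
  induction k generalizing X f U with
  | zero => exact ContinuousOn.neg hf
  | succ k ih =>
    obtain ⟨f1, hf1_quot, hf1⟩ := isCOn_succ_iff.mp hf
    refine isCOn_succ_iff.mpr ⟨fun p => -f1 p, fun x v t hx hxt => ?_, ih hf1⟩
    rw [neg_sub_neg, ← neg_sub, hf1_quot x v t hx hxt, smul_neg]

theorem IsCOn.sub [IsTopologicalAddGroup F] {k : ℕ} {f g : X → F} {U : Set X}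
    (hf : IsCOn F k (TVS.ofType X) f U) (hg : IsCOn F k (TVS.ofType X) g U) :
    IsCOn F k (TVS.ofType X) (fun x => f x - g x) U := by
  simpa only [sub_eq_add_neg] using hf.add hg.neg

theorem IsCOn.comp [IsTopologicalAddGroup X] [IsTopologicalAddGroup Y] {k : ℕ} {f : Y → F}
    {V : Set Y} {ψ : X → Y} {U : Set X} (hf : IsCOn F k (TVS.ofType Y) f V)
    (hψ : IsCOn Y k (TVS.ofType X) ψ U) (hmaps : MapsTo ψ U V) :
    IsCOn F k (TVS.ofType X) (fun x => f (ψ x)) U := by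
  induction k generalizing X Y F f V ψ U with
  | zero => exact ContinuousOn.comp hf hψ hmaps
  | succ k ih =>
    obtain ⟨f1, hf1_quot, hf1⟩ := isCOn_succ_iff.mp hf
    obtain ⟨ψ1, hψ1_quot, hψ1⟩ := isCOn_succ_iff.mp hψ
    have hstep : ∀ x v t, x ∈ U → x + t • v ∈ U → ψ (x + t • v) = ψ x + t • ψ1 (x, v, t) :=
      fun x v t hx hxt => eq_add_of_sub_eq' (hψ1_quot x v t hx hxt)
    refine isCOn_succ_iff.mpr ⟨fun p => f1 (ψ p.1, ψ1 p, p.2.2), fun x v t hx hxt => ?_, ?_⟩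
    · have hmem := hmaps hxt
      rw [hstep x v t hx hxt] at hmem ⊢
      exact hf1_quot _ _ t (hmaps hx) hmem
    · have hψ_fst : IsCOn Y k (TVS.ofType (X × X × ℝ)) (fun p => ψ p.1) (quotDomain U) :=
        ih hψ.of_succ (isCOn_of_isLinearMap (L := Prod.fst) ⟨fun _ _ => rfl, fun _ _ => rfl⟩
          continuous_fst _) fun p hp => hp.1
      have ht : IsCOn ℝ k (TVS.ofType (X × X × ℝ)) (fun p => p.2.2) (quotDomain U) :=
        isCOn_of_isLinearMap ⟨fun _ _ => rfl, fun _ _ => rfl⟩ (by fun_prop) _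
      refine ih hf1 (hψ_fst.prodMk (hψ1.prodMk ht)) ?_
      rintro ⟨x, v, t⟩ ⟨hx, hxt⟩
      exact ⟨hmaps hx, by simpa only [hstep x v t hx hxt] using hmaps hxt⟩

theorem IsCOn.comp_fst [IsTopologicalAddGroup X] {k : ℕ} {f : X → F} {U : Set X}
    (hf : IsCOn F k (TVS.ofType X) f U) :
    IsCOn F k (TVS.ofType (X × X × ℝ)) (fun p => f p.1) (quotDomain U) :=
  hf.comp (isCOn_of_isLinearMap ⟨fun _ _ => rfl, fun _ _ => rfl⟩ continuous_fst _)
    fun _ hp => hp.1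

theorem IsCOn.smul [IsTopologicalAddGroup X] [IsTopologicalAddGroup F] [ContinuousSMul ℝ F]
    {k : ℕ} {a : X → ℝ} {b : X → F} {U : Set X} (ha : IsCOn ℝ k (TVS.ofType X) a U)
    (hb : IsCOn F k (TVS.ofType X) b U) : IsCOn F k (TVS.ofType X) (fun x => a x • b x) U := by
  induction k generalizing X a b U with
  | zero => exact ContinuousOn.smul ha hb
  | succ k ih =>
    obtain ⟨a1, ha1_quot, ha1⟩ := isCOn_succ_iff.mp ha
    obtain ⟨b1, hb1_quot, hb1⟩ := isCOn_succ_iff.mp hb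
    have ht : IsCOn ℝ k (TVS.ofType (X × X × ℝ)) (fun p => p.2.2) (quotDomain U) :=
      isCOn_of_isLinearMap ⟨fun _ _ => rfl, fun _ _ => rfl⟩ (by fun_prop) _
    refine isCOn_succ_iff.mpr ⟨fun p => a1 p • b p.1 + a p.1 • b1 p + p.2.2 • a1 p • b1 p,
      fun x v t hx hxt => ?_,
      ((ih ha1 hb.of_succ.comp_fst).add (ih ha.of_succ.comp_fst hb1)).add (ih ht (ih ha1 hb1))⟩
    rw [eq_add_of_sub_eq' (ha1_quot x v t hx hxt), eq_add_of_sub_eq' (hb1_quot x v t hx hxt)]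
    module

end MichalBastiani

theorem isLinearMap_of_rightInverse {R M N : Type*} [Semiring R] [AddCommMonoid M] [Module R M]
    [AddCommMonoid N] [Module R N] {f : M → N} {f' : N → M} (hf : IsLinearMap R f)
    (hinj : Injective f) (hright : RightInverse f' f) : IsLinearMap R f' :=
  (LinearMap.inverse (hf.mk' f) f' (hright.leftInverse_of_injective hinj) hright).isLinear

section InverseFamily

variable {E₀ E₁ F₁ : Type} [AddCommGroup E₀] [Module ℝ E₀] [AddCommGroup E₁] [Module ℝ E₁]
  [AddCommGroup F₁] [Module ℝ F₁]
  {U : Set E₀} {h : E₀ × E₁ → F₁} {g : E₀ × F₁ → E₁}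

theorem inverse_sub_eq_smul (hlin : ∀ x ∈ U, IsLinearMap ℝ (fun w => h (x, w)))
    (hbij : ∀ x ∈ U, Bijective (fun w => h (x, w))) (hg : ∀ x ∈ U, ∀ v : F₁, h (x, g (x, v)) = v)
    {x u : E₀} {v ν w : F₁} {t : ℝ} (hx : x ∈ U) (hxt : x + t • u ∈ U)
    (hw : h (x + t • u, g (x, v)) - h (x, g (x, v)) = t • w) :
    g (x + t • u, v + t • ν) - g (x, v) = t • g (x + t • u, ν - w) := by
  have hgy := isLinearMap_of_rightInverse (hlin _ hxt) (hbij _ hxt).injective (hg _ hxt)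
  have hback : g (x + t • u, v + t • w) = g (x, v) := (hbij _ hxt).injective <| by
    rw [hg _ hxt, ← hw, hg x hx, add_sub_cancel]
  calc g (x + t • u, v + t • ν) - g (x, v)
      = g (x + t • u, v + t • ν) - g (x + t • u, v + t • w) := by rw [hback]
    _ = g (x + t • u, t • (ν - w)) := by rw [← hgy.map_sub, add_sub_add_left_eq_sub, smul_sub]
    _ = t • g (x + t • u, ν - w) := hgy.map_smul _ _

variable [TopologicalSpace E₀] [TopologicalSpace E₁] [TopologicalSpace F₁]

theorem isCOn_succ_inverse [IsTopologicalAddGroup E₀] [ContinuousSMul ℝ E₀]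
    [IsTopologicalAddGroup E₁] [IsTopologicalAddGroup F₁]
    (hlin : ∀ x ∈ U, IsLinearMap ℝ (fun w => h (x, w)))
    (hbij : ∀ x ∈ U, Bijective (fun w => h (x, w))) (hg : ∀ x ∈ U, ∀ v : F₁, h (x, g (x, v)) = v)
    {k : ℕ} (hh : IsCOn F₁ (k + 1) (TVS.ofType (E₀ × E₁)) h (U ×ˢ univ))
    (hgk : IsCOn E₁ k (TVS.ofType (E₀ × F₁)) g (U ×ˢ univ)) :
    IsCOn E₁ (k + 1) (TVS.ofType (E₀ × F₁)) g (U ×ˢ univ) := by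
  obtain ⟨h1, hh1_quot, hh1⟩ := isCOn_succ_iff.mp hh
  refine isCOn_succ_iff.mpr ⟨fun p => g (p.1.1 + p.2.2 • p.2.1.1,
    p.2.1.2 - h1 ((p.1.1, g p.1), (p.2.1.1, 0), p.2.2)), ?_, ?_⟩
  · rintro ⟨x, v⟩ ⟨u, ν⟩ t ⟨hx, -⟩ ⟨hxt, -⟩
    have hshift : (x, g (x, v)) + t • ((u, 0) : E₀ × E₁) = (x + t • u, g (x, v)) := by simp
    have hw := hh1_quot (x, g (x, v)) (u, 0) t ⟨hx, trivial⟩ (hshift ▸ ⟨hxt, trivial⟩)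
    rw [hshift] at hw
    exact inverse_sub_eq_smul hlin hbij hg hx hxt hw
  · have hΘ : IsCOn ((E₀ × E₁) × (E₀ × E₁) × ℝ) k (TVS.ofType ((E₀ × F₁) × (E₀ × F₁) × ℝ))
        (fun p => ((p.1.1, g p.1), (p.2.1.1, 0), p.2.2)) (quotDomain (U ×ˢ univ)) := by
      refine .prodMk (.prodMk ?_ hgk.comp_fst) (.prodMk ?_ ?_) <;>
        exact isCOn_of_isLinearMap ⟨by simp, by simp⟩ (by fun_prop) _
    have hΨ : IsCOn (E₀ × F₁) k (TVS.ofType ((E₀ × F₁) × (E₀ × F₁) × ℝ))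
        (fun p => (p.1.1 + p.2.2 • p.2.1.1, p.2.1.2 - h1 ((p.1.1, g p.1), (p.2.1.1, 0), p.2.2)))
        (quotDomain (U ×ˢ univ)) := by
      have hΘ_maps : MapsTo (fun p => ((p.1.1, g p.1), ((p.2.1.1, 0) : E₀ × E₁), p.2.2))
          (quotDomain (U ×ˢ univ)) (quotDomain (U ×ˢ univ)) :=
        fun _ hp => ⟨⟨hp.1.1, trivial⟩, ⟨by simpa using hp.2.1, trivial⟩⟩
      refine .prodMk (.add ?_ (.smul ?_ ?_)) (.sub ?_ (hh1.comp hΘ hΘ_maps)) <;>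
        exact isCOn_of_isLinearMap ⟨by simp, by simp⟩ (by fun_prop) _
    exact hgk.comp hΨ fun _ hp => ⟨hp.2.1, trivial⟩

theorem isDirDerivOn_inverse [IsTopologicalAddGroup E₀] [ContinuousSMul ℝ E₀] [ContinuousNeg F₁]
    (hlin : ∀ x ∈ U, IsLinearMap ℝ (fun w => h (x, w)))
    (hbij : ∀ x ∈ U, Bijective (fun w => h (x, w))) (hg : ∀ x ∈ U, ∀ v : F₁, h (x, g (x, v)) = v)
    (hgcont : ContinuousOn g (U ×ˢ univ)) {x : E₀} (hx : x ∈ U) {v : F₁} {u : E₀} {w : F₁}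
    (hw : IsDirDerivOn (U ×ˢ univ) h (x, g (x, v)) (u, 0) w) :
    IsDirDerivOn (U ×ˢ univ) g (x, v) (u, 0) (-(g (x, w))) := by
  have hdomain : ∀ {Z : Type} [AddCommGroup Z] [Module ℝ Z] (z : Z),
      {t : ℝ | t ≠ 0 ∧ (x, z) + t • ((u, 0) : E₀ × Z) ∈ U ×ˢ (univ : Set Z)} =
        {t | t ≠ 0 ∧ x + t • u ∈ U} := by
    intros; ext; simp
  unfold IsDirDerivOn at hw ⊢
  rw [hdomain] at hw ⊢
  set T := {t : ℝ | t ≠ 0 ∧ x + t • u ∈ U}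
  set q := fun t : ℝ => t⁻¹ • (h ((x, g (x, v)) + t • ((u, 0) : E₀ × E₁)) - h (x, g (x, v)))
  have hquot : ∀ t ∈ T, g (x + t • u, -q t) = t⁻¹ • (g ((x, v) + t • (u, 0)) - g (x, v)) := by
    rintro t ⟨ht, hxt⟩
    have := inverse_sub_eq_smul (v := v) (ν := 0) (w := q t) hlin hbij hg hx hxt
      (by simp [q, smul_smul, ht])
    simp only [Prod.smul_mk, smul_zero, Prod.mk_add_mk, add_zero] at this ⊢
    rw [this, smul_smul, inv_mul_cancel₀ ht, one_smul, zero_sub]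
  have hpath : Tendsto (fun t => (x + t • u, -q t)) (𝓝[T] 0) (𝓝[U ×ˢ univ] (x, -w)) := by
    refine tendsto_nhdsWithin_iff.mpr ⟨Tendsto.prodMk_nhds ?_ hw.neg,
      eventually_mem_nhdsWithin.mono fun t ht => ⟨ht.2, trivial⟩⟩
    exact tendsto_nhdsWithin_of_tendsto_nhds
      (Continuous.tendsto' (by fun_prop) 0 x (by simp))
  rw [← (isLinearMap_of_rightInverse (hlin x hx) (hbij x hx).injective (hg x hx)).map_neg]
  exact ((hgcont _ ⟨hx, trivial⟩).tendsto.comp hpath).congr'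
    (eventually_mem_nhdsWithin.mono hquot)

end InverseFamily

theorem stmt_8_general {E₀ E₁ F₁ : Type}
    [AddCommGroup E₀] [Module ℝ E₀] [TopologicalSpace E₀]
    [IsTopologicalAddGroup E₀] [ContinuousSMul ℝ E₀]
    [AddCommGroup E₁] [Module ℝ E₁] [TopologicalSpace E₁]
    [IsTopologicalAddGroup E₁]
    [AddCommGroup F₁] [Module ℝ F₁] [TopologicalSpace F₁]
    [IsTopologicalAddGroup F₁]
    (U : Set E₀)
    (h : E₀ × E₁ → F₁)
    (hsmooth : IsSmoothOn F₁ (TVS.ofType (E₀ × E₁)) h (U ×ˢ (Set.univ : Set E₁)))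
    (hlin : ∀ x ∈ U, IsLinearMap ℝ (fun w => h (x, w)))
    (hbij : ∀ x ∈ U, Function.Bijective (fun w => h (x, w)))
    (g : E₀ × F₁ → E₁)
    (hg : ∀ x ∈ U, ∀ v : F₁, h (x, g (x, v)) = v)
    (hgcont : ContinuousOn g (U ×ˢ (Set.univ : Set F₁))) :
    IsSmoothOn E₁ (TVS.ofType (E₀ × F₁)) g (U ×ˢ (Set.univ : Set F₁)) ∧
    ∀ x ∈ U, ∀ (v : F₁) (u : E₀) (w : F₁),
      IsDirDerivOn (U ×ˢ (Set.univ : Set E₁)) h (x, g (x, v)) (u, 0) w →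
      IsDirDerivOn (U ×ˢ (Set.univ : Set F₁)) g (x, v) (u, 0) (-(g (x, w))) := by
  refine ⟨fun k => ?_, fun x hx v u w => isDirDerivOn_inverse hlin hbij hg hgcont hx⟩
  induction k with
  | zero => exact hgcont
  | succ k ih => exact isCOn_succ_inverse hlin hbij hg (hsmooth (k + 1)) ih

/-- Let `h : U × E₁ → F₁` be smooth (`U ⊆ E₀` open) with each
`h_x := h(x,·) : E₁ → F₁` linear and invertible.  If `g : U × F₁ → E₁`,
`(x,v) ↦ h_x⁻¹(v)` is continuous, then `g` is smooth and its partial derivative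
in the first variable satisfies `d₁g(x,v)(u) = -g(x, d₁h(x, g(x,v))(u))` for
`x ∈ U`, `v ∈ F₁`, `u ∈ E₀`.  (Partial derivatives `d₁` are directional
derivatives in directions `(u,0)`; the formula is expressed against any value
`w = d₁h(x, g(x,v))(u)` of the — by Hausdorffness unique — derivative of `h`.) -/
theorem stmt_8 {E₀ E₁ F₁ : Type}
    [AddCommGroup E₀] [Module ℝ E₀] [TopologicalSpace E₀]
    [IsTopologicalAddGroup E₀] [ContinuousSMul ℝ E₀] [T2Space E₀] [LocallyConvexSpace ℝ E₀]
    [AddCommGroup E₁] [Module ℝ E₁] [TopologicalSpace E₁]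
    [IsTopologicalAddGroup E₁] [ContinuousSMul ℝ E₁] [T2Space E₁] [LocallyConvexSpace ℝ E₁]
    [AddCommGroup F₁] [Module ℝ F₁] [TopologicalSpace F₁]
    [IsTopologicalAddGroup F₁] [ContinuousSMul ℝ F₁] [T2Space F₁] [LocallyConvexSpace ℝ F₁]
    (U : Set E₀) (hU : IsOpen U)
    (h : E₀ × E₁ → F₁)
    (hsmooth : IsSmoothOn F₁ (TVS.ofType (E₀ × E₁)) h (U ×ˢ (Set.univ : Set E₁)))
    (hlin : ∀ x ∈ U, IsLinearMap ℝ (fun w => h (x, w)))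
    (hbij : ∀ x ∈ U, Function.Bijective (fun w => h (x, w)))
    (g : E₀ × F₁ → E₁)
    (hg : ∀ x ∈ U, ∀ v : F₁, h (x, g (x, v)) = v)
    (hgcont : ContinuousOn g (U ×ˢ (Set.univ : Set F₁))) :
    IsSmoothOn E₁ (TVS.ofType (E₀ × F₁)) g (U ×ˢ (Set.univ : Set F₁)) ∧
    ∀ x ∈ U, ∀ (v : F₁) (u : E₀) (w : F₁),
      IsDirDerivOn (U ×ˢ (Set.univ : Set E₁)) h (x, g (x, v)) (u, 0) w →
      IsDirDerivOn (U ×ˢ (Set.univ : Set F₁)) g (x, v) (u, 0) (-(g (x, w))) :=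
  stmt_8_general U h hsmooth hlin hbij g hg hgcont
end

section
/- A morphism f : E → E' of k-dimensional cubes, given by component maps f^ν for partitions ν of subsets I ⊆ {1,…,k}, is invertible (with inverse again a morphism of k-dimensional cubes) if and only if f^{{I}} : E_I → E'_I is bijective for every nonempty I ⊆ {1,…,k}, i.e. for all partitions of length one. -/
open Finset

/-- A (locally convex) `k`-dimensional cube: a family of real vector spaces
`E_I` indexed by the subsets `I ⊆ {1,…,k}` (only the nonempty `I` matter). -/
structure Cube (k : ℕ) : Type 1 where
  ax : Finset (Fin k) → Type
  grp : ∀ I, AddCommGroup (ax I)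
  mod : ∀ I, Module ℝ (ax I)

attribute [instance] Cube.grp Cube.mod

/-- The total space `E = ⊕_{∅ ≠ I ⊆ {1,…,k}} E_I` of a cube. -/
abbrev Cube.Total {k : ℕ} (E : Cube k) : Type :=
  ∀ I : {I : Finset (Fin k) // I.Nonempty}, E.ax I.1

noncomputable instance {k : ℕ} (I : Finset (Fin k)) : Fintype (Finpartition I) :=
  Fintype.ofInjective Finpartition.parts (by
    intro P Q h
    exact Finpartition.ext h)

/-- Blocks of a finpartition of a finset are nonempty. -/
theorem Finpartition.block_nonempty {k : ℕ} {I : Finset (Fin k)} (ν : Finpartition I)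
    {L : Finset (Fin k)} (hL : L ∈ ν.parts) : L.Nonempty :=
  Finset.nonempty_iff_ne_empty.mpr (fun h => ν.bot_notMem (by simpa [h] using hL))

/-- A morphism of `k`-dimensional cubes: for every partition `ν` of every
`I ⊆ {1,…,k}` a multilinear map `f^ν : E_{ν₁} × ⋯ × E_{ν_ℓ(ν)} → E'_I`. -/
structure CubeHom {k : ℕ} (E E' : Cube k) : Type where
  comp : ∀ (I : Finset (Fin k)) (ν : Finpartition I),
    MultilinearMap ℝ (fun L : ν.parts => E.ax L.1) (E'.ax I)

/-- The map on total spaces induced by a cube morphism: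
`(v_I)_I ↦ (Σ_{ν ∈ Part(I)} f^ν(v_{ν₁},…,v_{ν_ℓ(ν)}))_I`. -/
noncomputable def CubeHom.toFun {k : ℕ} {E E' : Cube k} (f : CubeHom E E')
    (v : E.Total) : E'.Total := fun I =>
  ∑ ν : Finpartition I.1,
    f.comp I.1 ν (fun L => v ⟨L.1, Finpartition.block_nonempty ν L.2⟩)

/-- The component `f^{{I}} : E_I → E'_I` of a cube morphism at the length-one
partition `{I}` of a nonempty `I ⊆ {1,…,k}`. -/
noncomputable def CubeHom.oneBlock {k : ℕ} {E E' : Cube k} (f : CubeHom E E')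
    (I : Finset (Fin k)) (hI : I.Nonempty) : E.ax I → E'.ax I := fun x =>
  f.comp I (Finpartition.indiscrete (Finset.nonempty_iff_ne_empty.mp hI))
    (fun L => cast (congrArg E.ax
      ((Finset.mem_singleton.mp L.2).symm : I = L.1)) x)

/-!
On a vector concentrated in a single component `E_I` a cube morphism acts by `f^{{I}}`, since
every other partition has a block where the vector vanishes; so an invertible `f` has bijective
one-block components. Conversely, `f(v)_I = f^{{I}}(v_I) + (terms in the v_L with L ⊊ I)`, so
`f(v) = w` can be solved by recursion on `|I|`, and expanding the recursion multilinearly (a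
refinement of a partition `ν` is the same as a partition of each block of `ν`) writes the solution
as a cube morphism `g` with `f ∘ g = id`. The one-block components of `g` are again bijective, so
`g` has a right inverse `h` as well, and `h = f ∘ g ∘ h = f` makes `g` a two-sided inverse.
-/

theorem Fintype.sum_sum_subtype_comm {α β M : Type*} [AddCommMonoid M] [Fintype α]
    (r : α → β → Prop) (p : β → Prop) [∀ a, Fintype {b // r a b ∧ p b}] [Fintype {b // p b}]
    [∀ b, Fintype {a // r a b}] (T : α → β → M) :
    ∑ a, ∑ b : {b // r a b ∧ p b}, T a b = ∑ b : {b // p b}, ∑ a : {a // r a b.1}, T a b := by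
  rw [← Fintype.sum_sigma (fun x : Σ a, {b // r a b ∧ p b} => T x.1 x.2),
    ← Fintype.sum_sigma (fun x : Σ b : {b // p b}, {a // r a b.1} => T x.2 x.1)]
  exact Fintype.sum_equiv
    { toFun x := ⟨⟨x.2, x.2.2.2⟩, ⟨x.1, x.2.2.1⟩⟩
      invFun x := ⟨x.2, x.1, x.2.2, x.1.2⟩ } _ _ fun _ => rfl

namespace Finpartition

section Lattice

variable {α : Type*} [Lattice α] [OrderBot α] {a : α}

theorem parts_eq_singleton_of_forall_eq (P : Finpartition a) (ha : a ≠ ⊥) {b : α}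
    (h : ∀ c ∈ P.parts, c = b) : P.parts = {b} :=
  Finset.eq_singleton_iff_nonempty_unique_mem.2 ⟨P.parts_nonempty ha, h⟩

theorem parts_eq_singleton_of_self_mem {P : Finpartition a} (h : a ∈ P.parts) :
    P.parts = {a} :=
  P.parts_eq_singleton_of_forall_eq (P.ne_bot h) fun c hc => by
    by_contra hca
    exact P.ne_bot hc ((P.disjoint hc h hca).eq_bot_of_le (P.le hc))

theorem mem_parts_iff_eq_indiscrete (P : Finpartition a) (ha : a ≠ ⊥) :
    a ∈ P.parts ↔ P = indiscrete ha :=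
  ⟨fun h => Finpartition.ext (parts_eq_singleton_of_self_mem h),
    fun h => h ▸ Finset.mem_singleton_self a⟩

theorem mem_parts_of_indiscrete_le {P : Finpartition a} (ha : a ≠ ⊥) (h : indiscrete ha ≤ P) :
    a ∈ P.parts := by
  obtain ⟨c, hc, hac⟩ := h (Finset.mem_singleton_self a)
  exact le_antisymm (P.le hc) hac ▸ hc

theorem sum_eq_indiscrete_add {M : Type*} [AddCommMonoid M] (ha : a ≠ ⊥)
    [Fintype (Finpartition a)] [DecidableEq (Finpartition a)]
    [Fintype {ν : Finpartition a // a ∉ ν.parts}] (F : Finpartition a → M) :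
    ∑ ν, F ν = F (indiscrete ha) + ∑ ν : {ν : Finpartition a // a ∉ ν.parts}, F ν := by
  rw [Fintype.sum_eq_add_sum_subtype_ne _ (indiscrete ha)]
  congr 1
  exact Fintype.sum_equiv
    (Equiv.subtypeEquivRight fun ν => (ν.mem_parts_iff_eq_indiscrete ha).not.symm) _ _
    fun _ => rfl

end Lattice

section DistribLattice

variable {α : Type*} [DistribLattice α] [OrderBot α] [DecidableEq α] {a : α}
  {μ ν : Finpartition a}

theorem bind_le (P : Finpartition a) (Q : ∀ b ∈ P.parts, Finpartition b) : P.bind Q ≤ P := by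
  intro c hc
  obtain ⟨b, hb, hc⟩ := mem_bind.1 hc
  exact ⟨b, hb, (Q b hb).le hc⟩

theorem mem_restrict_parts_iff_of_le (h : μ ≤ ν) {b : α} (hb : b ∈ ν.parts) {c : α} :
    c ∈ (μ.restrict (ν.le hb)).parts ↔ c ∈ μ.parts ∧ c ≤ b := by
  simp only [restrict, Finset.mem_erase, Finset.mem_image]
  constructor
  · rintro ⟨hc, d, hd, rfl⟩
    obtain ⟨e, he, hde⟩ := h hd
    obtain rfl : e = b := by
      by_contra heb
      exact hc ((ν.disjoint he hb heb).mono_left hde).eq_bot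
    rw [inf_eq_left.2 hde]
    exact ⟨hd, hde⟩
  · rintro ⟨hc, hcb⟩
    exact ⟨μ.ne_bot hc, c, hc, inf_eq_left.2 hcb⟩

theorem bind_restrict_of_le (h : μ ≤ ν) : ν.bind (fun _ hb => μ.restrict (ν.le hb)) = μ := by
  ext c
  rw [mem_bind]
  constructor
  · rintro ⟨b, hb, hc⟩
    exact ((mem_restrict_parts_iff_of_le h hb).1 hc).1
  · intro hc
    obtain ⟨b, hb, hcb⟩ := h hc
    exact ⟨b, hb, (mem_restrict_parts_iff_of_le h hb).2 ⟨hc, hcb⟩⟩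

theorem restrict_bind (Q : ∀ b ∈ ν.parts, Finpartition b) {b : α} (hb : b ∈ ν.parts) :
    (ν.bind Q).restrict (ν.le hb) = Q b hb := by
  ext c
  rw [mem_restrict_parts_iff_of_le (ν.bind_le Q) hb, mem_bind]
  constructor
  · rintro ⟨⟨d, hd, hc⟩, hcb⟩
    obtain rfl : d = b := ν.disjoint.elim' hd hb
      (ne_bot_of_le_ne_bot ((Q d hd).ne_bot hc) (le_inf ((Q d hd).le hc) hcb))
    exact hc
  · intro hc
    exact ⟨⟨b, hb, hc⟩, (Q b hb).le hc⟩

def refinementEquiv (ν : Finpartition a) :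
    {μ : Finpartition a // μ ≤ ν} ≃ ∀ b : ν.parts, Finpartition b.1 where
  toFun μ b := μ.1.restrict (ν.le b.2)
  invFun Q := ⟨ν.bind fun b hb => Q ⟨b, hb⟩, ν.bind_le _⟩
  left_inv μ := Subtype.ext (bind_restrict_of_le μ.2)
  right_inv Q := funext fun b => restrict_bind (fun c hc => Q ⟨c, hc⟩) b.2

noncomputable def sigmaPartsRestrictEquiv (h : μ ≤ ν) :
    (Σ b : ν.parts, (μ.restrict (ν.le b.2)).parts) ≃ μ.parts :=
  Equiv.ofBijective (fun s => ⟨s.2.1, ((mem_restrict_parts_iff_of_le h s.1.2).1 s.2.2).1⟩) <| by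
    constructor
    · rintro ⟨b, c, hc⟩ ⟨b', c', hc'⟩ hcc'
      obtain rfl : c = c' := congrArg Subtype.val hcc'
      rw [mem_restrict_parts_iff_of_le h b.2] at hc
      rw [mem_restrict_parts_iff_of_le h b'.2] at hc'
      obtain rfl : b = b' := Subtype.ext <| ν.disjoint.elim' b.2 b'.2
        (ne_bot_of_le_ne_bot (μ.ne_bot hc.1) (le_inf hc.2 hc'.2))
      rfl
    · rintro ⟨c, hc⟩
      obtain ⟨b, hb, hcb⟩ := h hc
      exact ⟨⟨⟨b, hb⟩, c, (mem_restrict_parts_iff_of_le h hb).2 ⟨hc, hcb⟩⟩, rfl⟩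

end DistribLattice

end Finpartition

namespace MultilinearMap

variable {R : Type*} [CommSemiring R] {α : Type*} {P : Type*} [AddCommMonoid P] [Module R P]

def evalOfSubsingleton {ι : Type*} {M : ι → Type*} [∀ i, AddCommMonoid (M i)]
    [∀ i, Module R (M i)] [Subsingleton ι] (i : ι) : MultilinearMap R M (M i) where
  toFun x := x i
  map_update_add' x j a b := by obtain rfl := Subsingleton.elim j i; simp
  map_update_smul' x j c a := by obtain rfl := Subsingleton.elim j i; simp

variable {M N : α → Type*} [∀ b, AddCommMonoid (M b)] [∀ b, Module R (M b)]
  [∀ b, AddCommMonoid (N b)] [∀ b, Module R (N b)]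

section Lattice

variable [Lattice α] [OrderBot α] {a : α}

open Classical in
noncomputable def oneBlockProj (μ : Finpartition a) :
    MultilinearMap R (fun b : μ.parts => M b.1) (M a) :=
  if h : a ∈ μ.parts then
    haveI : Subsingleton μ.parts := by
      rw [Finpartition.parts_eq_singleton_of_self_mem h]; infer_instance
    evalOfSubsingleton (M := fun b : μ.parts => M b.1) ⟨a, h⟩
  else 0

theorem oneBlockProj_indiscrete (ha : a ≠ ⊥) (x : ∀ b : (Finpartition.indiscrete ha).parts, M b.1) :
    oneBlockProj (R := R) _ x = x ⟨a, Finset.mem_singleton_self a⟩ := by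
  rw [oneBlockProj,
    dif_pos (show a ∈ (Finpartition.indiscrete ha).parts from Finset.mem_singleton_self a)]
  rfl

theorem oneBlockProj_of_not_mem {μ : Finpartition a} (h : a ∉ μ.parts) :
    oneBlockProj (R := R) (M := M) μ = 0 :=
  dif_neg h

end Lattice

section DistribLattice

variable [DistribLattice α] [OrderBot α] [DecidableEq α] {a : α} {μ ν : Finpartition a}

noncomputable def compRefinement (h : μ ≤ ν) (Φ : MultilinearMap R (fun b : ν.parts => N b.1) P)
    (D : ∀ b : ν.parts,
      MultilinearMap R (fun c : (μ.restrict (ν.le b.2)).parts => M c.1) (N b.1)) :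
    MultilinearMap R (fun c : μ.parts => M c.1) P :=
  (domDomCongrLinearEquiv' R R (fun c : μ.parts => M c.1) P
    (Finpartition.sigmaPartsRestrictEquiv h).symm).symm (Φ.compMultilinearMap D)

theorem map_sum_finpartition [∀ b : α, Fintype (Finpartition b)]
    [Fintype {μ : Finpartition a // μ ≤ ν}] (Φ : MultilinearMap R (fun b : ν.parts => N b.1) P)
    (F : ∀ b : ν.parts, Finpartition b.1 → N b.1) :
    Φ (fun b => ∑ ρ, F b ρ) =
      ∑ μ : {μ : Finpartition a // μ ≤ ν}, Φ fun b => F b (μ.1.restrict (ν.le b.2)) := by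
  rw [Φ.map_sum]
  exact (Fintype.sum_equiv ν.refinementEquiv _ _ fun _ => rfl).symm

end DistribLattice

end MultilinearMap

def Cube.Total.blocks {k : ℕ} {E : Cube k} (v : E.Total) {I : Finset (Fin k)}
    (ν : Finpartition I) (L : ν.parts) : E.ax L.1 :=
  v ⟨L.1, ν.block_nonempty L.2⟩

namespace CubeHom

open Function

variable {k : ℕ} {E E' : Cube k} (f : CubeHom E E')

theorem toFun_apply (v : E.Total) {I : Finset (Fin k)} (hI : I.Nonempty) :
    f.toFun v ⟨I, hI⟩ = ∑ ν : Finpartition I, f.comp I ν (v.blocks ν) := rfl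

theorem comp_indiscrete_blocks (v : E.Total) {I : Finset (Fin k)} (hI : I.Nonempty) :
    f.comp I (Finpartition.indiscrete hI.ne_empty) (v.blocks _) = f.oneBlock I hI (v ⟨I, hI⟩) := by
  unfold oneBlock
  congr 1
  funext ⟨L, hL⟩
  obtain rfl := Finset.mem_singleton.1 hL
  rfl

theorem comp_blocks_single_eq_zero {I J : Finset (Fin k)} (hI : I.Nonempty) (x : E.ax I)
    {ν : Finpartition J} {L : Finset (Fin k)} (hL : L ∈ ν.parts) (hLI : L ≠ I) :
    f.comp J ν (Cube.Total.blocks (E := E) (Pi.single ⟨I, hI⟩ x) ν) = 0 :=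
  (f.comp J ν).map_coord_zero ⟨L, hL⟩ <|
    Pi.single_eq_of_ne (M := fun J : {J : Finset (Fin k) // J.Nonempty} => E.ax J.1)
      (i := ⟨I, hI⟩) (i' := ⟨L, ν.block_nonempty hL⟩) (fun h => hLI (congrArg Subtype.val h)) x

theorem toFun_single {I : Finset (Fin k)} (hI : I.Nonempty) (x : E.ax I) :
    f.toFun (Pi.single ⟨I, hI⟩ x) = Pi.single ⟨I, hI⟩ (f.oneBlock I hI x) := by
  funext ⟨J, hJ⟩
  rw [toFun_apply]
  by_cases hJI : J = I
  · subst hJI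
    rw [Pi.single_eq_same, Fintype.sum_eq_single (Finpartition.indiscrete hJ.ne_empty),
      comp_indiscrete_blocks, Pi.single_eq_same]
    intro ν hν
    obtain ⟨L, hL, hLJ⟩ : ∃ L ∈ ν.parts, L ≠ J := by
      by_contra! h
      exact hν (Finpartition.ext (ν.parts_eq_singleton_of_forall_eq hJ.ne_empty h))
    exact f.comp_blocks_single_eq_zero hJ x hL hLJ
  · rw [Pi.single_eq_of_ne (fun h => hJI (congrArg Subtype.val h))]
    refine Finset.sum_eq_zero fun ν _ => ?_
    obtain ⟨L, hL, hLI⟩ : ∃ L ∈ ν.parts, L ≠ I := by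
      by_contra! h
      have hν := ν.sup_parts
      rw [ν.parts_eq_singleton_of_forall_eq hJ.ne_empty h, Finset.sup_singleton] at hν
      exact hJI hν.symm
    exact f.comp_blocks_single_eq_zero hI x hL hLI

theorem oneBlock_leftInverse {g : CubeHom E' E} (h : LeftInverse g.toFun f.toFun)
    (I : Finset (Fin k)) (hI : I.Nonempty) : LeftInverse (g.oneBlock I hI) (f.oneBlock I hI) := by
  intro x
  have hx := congrFun (h (Pi.single ⟨I, hI⟩ x)) ⟨I, hI⟩
  rwa [toFun_single, toFun_single, Pi.single_eq_same, Pi.single_eq_same] at hx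

noncomputable def oneBlockLinear (I : Finset (Fin k)) (hI : I.Nonempty) :
    E.ax I →ₗ[ℝ] E'.ax I :=
  (f.comp I (Finpartition.indiscrete hI.ne_empty)).toLinearMap 0 ⟨I, mem_singleton_self I⟩

theorem coe_oneBlockLinear (I : Finset (Fin k)) (hI : I.Nonempty) :
    ⇑(f.oneBlockLinear I hI) = f.oneBlock I hI := by
  funext x
  simp only [oneBlockLinear, MultilinearMap.toLinearMap_apply, oneBlock]
  congr 1
  funext ⟨L, hL⟩
  obtain rfl := Finset.mem_singleton.1 hL
  simp

open Classical in
/-- The components of the solution `g` of `g = φ ∘ (id - (f - f₀) ∘ g)`, where `f₀` is the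
one-block part of `f` and `φ` is meant to invert it; `oneBlockProj` plays the role of `id`. The
recursion terminates because every block of a partition `ν` of `I` with `I ∉ ν` is smaller
than `I`. -/
noncomputable def rightInvComp (φ : ∀ I, E'.ax I →ₗ[ℝ] E.ax I) (I : Finset (Fin k))
    (μ : Finpartition I) : MultilinearMap ℝ (fun c : μ.parts => E'.ax c.1) (E.ax I) :=
  (φ I).compMultilinearMap <| MultilinearMap.oneBlockProj (M := E'.ax) μ -
    ∑ ν : {ν : Finpartition I // μ ≤ ν ∧ I ∉ ν.parts},
      (f.comp I ν).compRefinement (M := E'.ax) (N := E.ax) ν.2.1 fun L =>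
        rightInvComp φ L.1 (μ.restrict (ν.1.le L.2))
termination_by I.card
decreasing_by
  exact Finset.card_lt_card
    (Finset.ssubset_iff_subset_ne.2 ⟨ν.1.le L.2, ne_of_mem_of_not_mem L.2 ν.2.2⟩)

noncomputable def rightInv (φ : ∀ I, E'.ax I →ₗ[ℝ] E.ax I) : CubeHom E' E :=
  ⟨f.rightInvComp φ⟩

theorem sum_oneBlockProj_blocks (w : E'.Total) {I : Finset (Fin k)} (hI : I.Nonempty) :
    ∑ μ : Finpartition I, MultilinearMap.oneBlockProj (R := ℝ) (M := E'.ax) μ (w.blocks μ) =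
      w ⟨I, hI⟩ := by
  rw [Fintype.sum_eq_single (Finpartition.indiscrete hI.ne_empty)
    fun μ hμ => by rw [MultilinearMap.oneBlockProj_of_not_mem
      ((μ.mem_parts_iff_eq_indiscrete _).not.2 hμ), zero_apply]]
  exact MultilinearMap.oneBlockProj_indiscrete _ _

open Classical in
theorem toFun_rightInv_apply (φ : ∀ I, E'.ax I →ₗ[ℝ] E.ax I) (w : E'.Total)
    {I : Finset (Fin k)} (hI : I.Nonempty) :
    (f.rightInv φ).toFun w ⟨I, hI⟩ = φ I (w ⟨I, hI⟩ - ∑ ν : {ν : Finpartition I // I ∉ ν.parts},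
      f.comp I ν (((f.rightInv φ).toFun w).blocks ν.1)) := by
  set T : Finpartition I → Finpartition I → E'.ax I := fun μ ν =>
    f.comp I ν fun L => f.rightInvComp φ L.1 (μ.restrict (ν.le L.2)) (w.blocks _)
  have hterm (μ : Finpartition I) : (f.rightInv φ).comp I μ (w.blocks μ) =
      φ I (MultilinearMap.oneBlockProj (R := ℝ) (M := E'.ax) μ (w.blocks μ) -
        ∑ ν : {ν // μ ≤ ν ∧ I ∉ ν.parts}, T μ ν) := by
    dsimp only [rightInv]
    rw [rightInvComp]
    simp only [LinearMap.compMultilinearMap_apply, sub_apply, _root_.sum_apply]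
    rfl
  have hinner (ν : {ν : Finpartition I // I ∉ ν.parts}) :
      ∑ μ : {μ // μ ≤ ν.1}, T μ ν = f.comp I ν (((f.rightInv φ).toFun w).blocks ν.1) :=
    ((f.comp I ν).map_sum_finpartition (N := E.ax)
      fun L ρ => f.rightInvComp φ L.1 ρ (w.blocks ρ)).symm
  rw [toFun_apply, Finset.sum_congr rfl fun μ _ => hterm μ, ← map_sum, Finset.sum_sub_distrib,
    sum_oneBlockProj_blocks, Fintype.sum_sum_subtype_comm _ _ T,
    Finset.sum_congr rfl fun ν _ => hinner ν]

theorem rightInverse_rightInv {φ : ∀ I, E'.ax I →ₗ[ℝ] E.ax I}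
    (hφ : ∀ I (hI : I.Nonempty) y, f.oneBlock I hI (φ I y) = y) :
    RightInverse (f.rightInv φ).toFun f.toFun := by
  classical
  intro w
  funext ⟨I, hI⟩
  rw [toFun_apply, Finpartition.sum_eq_indiscrete_add hI.ne_empty, comp_indiscrete_blocks,
    toFun_rightInv_apply, hφ, sub_add_cancel]

theorem oneBlock_rightInv (φ : ∀ I, E'.ax I →ₗ[ℝ] E.ax I) (I : Finset (Fin k))
    (hI : I.Nonempty) : (f.rightInv φ).oneBlock I hI = φ I := by
  classical
  funext y
  have : IsEmpty {ν : Finpartition I // Finpartition.indiscrete hI.ne_empty ≤ ν ∧ I ∉ ν.parts} :=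
    ⟨fun ν => ν.2.2 (Finpartition.mem_parts_of_indiscrete_le _ ν.2.1)⟩
  rw [oneBlock]
  dsimp only [rightInv]
  rw [rightInvComp]
  simp only [LinearMap.compMultilinearMap_apply, Finset.univ_eq_empty, Finset.sum_empty, sub_zero,
    MultilinearMap.oneBlockProj_indiscrete]
  rfl

theorem exists_rightInverse_of_bijective (hf : ∀ I (hI : I.Nonempty), Bijective (f.oneBlock I hI)) :
    ∃ g : CubeHom E' E,
      RightInverse g.toFun f.toFun ∧ ∀ I (hI : I.Nonempty), Bijective (g.oneBlock I hI) := by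
  classical
  let e (I : Finset (Fin k)) (hI : I.Nonempty) : E.ax I ≃ₗ[ℝ] E'.ax I :=
    LinearEquiv.ofBijective (f.oneBlockLinear I hI) (by rw [coe_oneBlockLinear]; exact hf I hI)
  let φ (I : Finset (Fin k)) : E'.ax I →ₗ[ℝ] E.ax I :=
    if hI : I.Nonempty then (e I hI).symm else 0
  have hφ (I : Finset (Fin k)) (hI : I.Nonempty) : φ I = (e I hI).symm := dif_pos hI
  refine ⟨f.rightInv φ, f.rightInverse_rightInv fun I hI y => ?_, fun I hI => ?_⟩
  · rw [hφ I hI, ← coe_oneBlockLinear]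
    exact (e I hI).apply_symm_apply y
  · rw [oneBlock_rightInv, hφ I hI]
    exact (e I hI).symm.bijective

end CubeHom

/-- A morphism `f : E → E'` of `k`-dimensional cubes, given by component
maps `f^ν` for partitions `ν` of subsets `I ⊆ {1,…,k}`, is invertible (with inverse
again a morphism of `k`-dimensional cubes) if and only if `f^{{I}} : E_I → E'_I` is
bijective for every nonempty `I ⊆ {1,…,k}`, i.e. for all partitions of length one. -/
theorem stmt_9 {k : ℕ} {E E' : Cube k} (f : CubeHom E E') :
    (∃ g : CubeHom E' E,
      Function.LeftInverse g.toFun f.toFun ∧ Function.RightInverse g.toFun f.toFun) ↔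
    (∀ (I : Finset (Fin k)) (hI : I.Nonempty), Function.Bijective (f.oneBlock I hI)) := by
  constructor
  · rintro ⟨g, hgf, hfg⟩ I hI
    exact ⟨(f.oneBlock_leftInverse hgf I hI).injective,
      (g.oneBlock_leftInverse hfg I hI).surjective⟩
  · intro hf
    obtain ⟨g, hfg, hg⟩ := f.exists_rightInverse_of_bijective hf
    obtain ⟨h, hgh, -⟩ := g.exists_rightInverse_of_bijective hg
    have hfh : f.toFun = h.toFun :=
      funext fun v => (congrArg f.toFun (hgh v)).symm.trans (hfg (h.toFun v))
    exact ⟨g, hfh ▸ hgh, hfg⟩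
end

section
/- Let f : U → F̄ be a natural transformation (U an open subfunctor of Ē) with each f_Λ smooth. If x ∈ U_ℝ and y_i ∈ λ_{I_i} E_{|I_i| mod 2} ⊆ Ē_{Λ_m} for nonempty subsets I₁,…,Iₙ ⊆ {1,…,m}, then dⁿf_{Λ_m}(x)(y₁,…,yₙ) lies in λ_{I₁}⋯λ_{Iₙ} F_{ℓ mod 2} where ℓ = |I₁ ∪ ⋯ ∪ Iₙ|; moreover, if the sets I₁,…,Iₙ are not pairwise disjoint then dⁿf_{Λ_m}(x)(y₁,…,yₙ) = 0. -/
/-!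
The diagonal even automorphisms `λ_i ↦ c_i λ_i` (all `c_i ≠ 0`) fix the real point `x` and
multiply `y_i` by `∏_{j ∈ I_i} c_j`. Naturality together with uniqueness of iterated directional
derivatives on an open set gives `grScale c w = (∏_i ∏_{j ∈ I_i} c_j) • w`, so a nonzero
coefficient `w_K` forces `∏_{j ∈ K} c_j = ∏_i ∏_{j ∈ I_i} c_j` for every such `c`. Taking
`c = 2` at a single index `a` and `1` elsewhere and comparing powers of 2, `a` lies in exactly
one `I_i` if `a ∈ K` and in none otherwise. Hence `K = ⋃ I_i`, and `w = 0` unless the `I_i` are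
pairwise disjoint.
-/

open Filter Topology Finset

/-- `y = dᵐf(x)(v₁,…,v_m)`, the iterated directional derivative within `U`. -/
def IsIterDerivOn {X Y : Type} [AddCommGroup X] [Module ℝ X] [TopologicalSpace X]
    [AddCommGroup Y] [Module ℝ Y] [TopologicalSpace Y]
    (U : Set X) (f : X → Y) : (m : ℕ) → X → (Fin m → X) → Y → Prop
  | 0, x, _v, y => y = f x
  | m+1, x, v, y => ∃ ψ : X → Y,
      (∀ z ∈ U, IsIterDerivOn U f m z (Fin.tail v) (ψ z)) ∧
      IsDirDerivOn U ψ x (v 0) y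

variable {m : ℕ}

/-- The coordinate model of `Ē_{Λ_m}`: families `(x_I)_{I ⊆ {1,…,m}}` with
`x_I ∈ E_{|I| mod 2}` (the coefficient of the monomial `λ_I`). -/
abbrev GrCoeff (E : Bool → Type) [∀ b, AddCommGroup (E b)] [∀ b, Module ℝ (E b)]
    (m : ℕ) : Type :=
  ∀ I : Finset (Fin m), E (Nat.bodd I.card)

/-- The body (the `λ_∅`-coefficient) of an element of `Ē_{Λ_m}`. -/
noncomputable def body {E : Bool → Type} [∀ b, AddCommGroup (E b)] [∀ b, Module ℝ (E b)]
    (x : GrCoeff E m) : E false :=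
  cast (congrArg E (by simp : Nat.bodd (∅ : Finset (Fin m)).card = false)) (x ∅)

/-- The action on `Ē_{Λ_m}` of the diagonal even algebra endomorphism of `Λ_m`
determined by `λ_i ↦ c_i λ_i`. -/
def grScale {E : Bool → Type} [∀ b, AddCommGroup (E b)] [∀ b, Module ℝ (E b)]
    (c : Fin m → ℝ) (x : GrCoeff E m) : GrCoeff E m :=
  fun I => (∏ i ∈ I, c i) • x I

section IterDeriv

variable {X Y : Type} [AddCommGroup X] [Module ℝ X] [TopologicalSpace X]
  [AddCommGroup Y] [Module ℝ Y] [TopologicalSpace Y]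

theorem IsOpen.neBot_nhdsWithin_line [ContinuousAdd X] [ContinuousSMul ℝ X] {V : Set X}
    (hV : IsOpen V) {x : X} (hx : x ∈ V) (v : X) :
    (𝓝[{t : ℝ | t ≠ 0 ∧ x + t • v ∈ V}] 0).NeBot := by
  have hline : {t : ℝ | x + t • v ∈ V} ∈ 𝓝 (0 : ℝ) :=
    (hV.preimage (by fun_prop)).mem_nhds (by simpa using hx)
  change (𝓝[{0}ᶜ ∩ {t : ℝ | x + t • v ∈ V}] 0).NeBot
  rw [nhdsWithin_inter_of_mem' (mem_nhdsWithin_of_mem_nhds hline)]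
  infer_instance

theorem IsIterDerivOn.unique [ContinuousAdd X] [ContinuousSMul ℝ X] [T2Space Y] {V : Set X}
    (hV : IsOpen V) {f : X → Y} {N : ℕ} {x : X} (hx : x ∈ V) {y : Fin N → X} {w w' : Y}
    (hw : IsIterDerivOn V f N x y w) (hw' : IsIterDerivOn V f N x y w') : w = w' := by
  induction N generalizing x w w' with
  | zero => exact hw.trans hw'.symm
  | succ N ih =>
    obtain ⟨ψ, hψ, hd⟩ := hw
    obtain ⟨ψ', hψ', hd'⟩ := hw'
    have := hV.neBot_nhdsWithin_line hx (y 0)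
    refine tendsto_nhds_unique_of_eventuallyEq hd hd' ?_
    filter_upwards [self_mem_nhdsWithin] with t ht
    rw [ih ht.2 (hψ _ ht.2) (hψ' _ ht.2), ih hx (hψ _ hx) (hψ' _ hx)]

theorem IsDirDerivOn.const_smul [ContinuousConstSMul ℝ Y] {V : Set X} {ψ : X → Y} {x v : X}
    {w : Y} (h : IsDirDerivOn V ψ x v w) (b : ℝ) :
    IsDirDerivOn V (fun z => b • ψ z) x v (b • w) :=
  (Tendsto.const_smul h b).congr fun t => by rw [smul_comm, smul_sub]

theorem IsDirDerivOn.smul_direction [ContinuousConstSMul ℝ Y] {V : Set X} {ψ : X → Y} {x v : X}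
    {w : Y} (h : IsDirDerivOn V ψ x v w) {a : ℝ} (ha : a ≠ 0) :
    IsDirDerivOn V ψ x (a • v) (a • w) := by
  have hmul : Tendsto (a * ·) (𝓝[{t : ℝ | t ≠ 0 ∧ x + t • a • v ∈ V}] 0)
      (𝓝[{s : ℝ | s ≠ 0 ∧ x + s • v ∈ V}] 0) := by
    refine tendsto_nhdsWithin_iff.mpr ⟨?_, ?_⟩
    · simpa using tendsto_nhdsWithin_of_tendsto_nhds ((continuous_const_mul a).tendsto 0)
    · filter_upwards [self_mem_nhdsWithin] with t ⟨ht, htV⟩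
      exact ⟨mul_ne_zero ha ht, by rwa [mul_smul, smul_comm]⟩
  refine (Tendsto.const_smul (h.comp hmul) a).congr fun t => ?_
  change a • ((a * t)⁻¹ • (ψ (x + (a * t) • v) - ψ x)) = _
  rw [smul_smul, mul_inv, mul_inv_cancel_left₀ ha, mul_comm a t, mul_smul]

theorem IsIterDerivOn.smul_directions [ContinuousConstSMul ℝ Y] {V : Set X} {f : X → Y} {N : ℕ}
    {x : X} {y : Fin N → X} {w : Y} (hw : IsIterDerivOn V f N x y w) {μ : Fin N → ℝ}
    (hμ : ∀ i, μ i ≠ 0) : IsIterDerivOn V f N x (fun i => μ i • y i) ((∏ i, μ i) • w) := by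
  induction N generalizing x w with
  | zero => simpa [IsIterDerivOn] using hw
  | succ N ih =>
    obtain ⟨ψ, hψ, hd⟩ := hw
    refine ⟨fun z => (∏ i : Fin N, μ i.succ) • ψ z,
      fun z hz => ih (hψ z hz) (μ := Fin.tail μ) fun i => hμ i.succ, ?_⟩
    rw [Fin.prod_univ_succ, mul_comm, mul_smul]
    exact (hd.smul_direction (hμ 0)).const_smul _

theorem IsIterDerivOn.map_linearEquiv {X' Y' : Type} [AddCommGroup X'] [Module ℝ X']
    [TopologicalSpace X'] [AddCommGroup Y'] [Module ℝ Y'] [TopologicalSpace Y']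
    {V : Set X} {V' : Set X'} {f : X → Y} {g : X' → Y'} (φ : X ≃ₗ[ℝ] X')
    (hφV : ∀ z, φ z ∈ V' ↔ z ∈ V) (T : Y →L[ℝ] Y') (hfg : ∀ z ∈ V, g (φ z) = T (f z))
    {N : ℕ} {x : X} {y : Fin N → X} {w : Y} (hx : x ∈ V) (hw : IsIterDerivOn V f N x y w) :
    IsIterDerivOn V' g N (φ x) (fun i => φ (y i)) (T w) := by
  induction N generalizing x w with
  | zero => exact (congrArg T hw).trans (hfg x hx).symm
  | succ N ih =>
    obtain ⟨ψ, hψ, hd⟩ := hw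
    refine ⟨fun z => T (ψ (φ.symm z)), fun z hz => ?_, ?_⟩
    · have hz' : φ.symm z ∈ V := (hφV _).mp (by simpa using hz)
      have := ih hz' (hψ _ hz')
      rwa [φ.apply_symm_apply] at this
    · have hline : ∀ t : ℝ, φ x + t • φ (y 0) = φ (x + t • y 0) := fun t => by simp
      unfold IsDirDerivOn
      simp only [hline, hφV, LinearEquiv.symm_apply_apply]
      exact ((T.continuous.tendsto w).comp hd).congr fun t => by simp

end IterDeriv

section Counting

variable {α ι : Type*} [DecidableEq α] [Fintype ι] {K : Finset α} {I : ι → Finset α}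

theorem card_filter_mem_eq_of_prod_eq
    (h : ∀ c : α → ℝ, (∀ j, c j ≠ 0) → ∏ j ∈ K, c j = ∏ i, ∏ j ∈ I i, c j) (a : α) :
    #{i | a ∈ I i} = if a ∈ K then 1 else 0 := by
  have hprod (s : Finset α) :
      ∏ j ∈ s, (if a = j then (2 : ℝ) else 1) = 2 ^ (if a ∈ s then 1 else 0) := by
    rw [prod_ite_eq]
    split_ifs <;> simp
  have hc := h (fun j => if a = j then 2 else 1) fun j => by split_ifs <;> norm_num
  simp only [hprod, prod_pow_eq_pow_sum, sum_boole, Nat.cast_id] at hc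
  exact (pow_right_injective₀ (by norm_num : (0 : ℝ) < 2) (by norm_num) hc).symm

theorem eq_sup_of_card_filter_mem_eq (h : ∀ a, #{i | a ∈ I i} = if a ∈ K then 1 else 0) :
    K = univ.sup I := by
  ext a
  rw [Finset.mem_sup, ← filter_nonempty_iff, ← card_pos, h a]
  split_ifs <;> simp [*]

theorem pairwise_disjoint_of_card_filter_mem_le_one (h : ∀ a, #{i | a ∈ I i} ≤ 1) :
    ∀ i j, i ≠ j → Disjoint (I i) (I j) := fun i j hij =>
  disjoint_left.mpr fun a hi hj =>
    (h a).not_gt (one_lt_card.mpr ⟨i, by simpa using hi, j, by simpa using hj, hij⟩)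

end Counting

section Grassmann

variable {G : Bool → Type} [∀ b, AddCommGroup (G b)] [∀ b, Module ℝ (G b)]

theorem continuous_body [∀ b, TopologicalSpace (G b)] :
    Continuous (body : GrCoeff G m → G false) := by
  have hcast : ∀ (b : Bool) (h : b = false), Continuous (cast (congrArg G h)) := by
    rintro b rfl
    exact continuous_id
  unfold body
  exact (hcast _ (by simp)).comp (continuous_apply ∅)

theorem body_grScale (c : Fin m → ℝ) (z : GrCoeff G m) : body (grScale c z) = body z := by
  unfold body grScale
  rw [prod_empty, one_smul]

theorem grScale_eq_self (c : Fin m → ℝ) {z : GrCoeff G m} (hz : ∀ I, I ≠ ∅ → z I = 0) :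
    grScale c z = z := by
  funext K
  rcases eq_or_ne K ∅ with rfl | hK
  · exact (congrArg (· • z ∅) prod_empty).trans (one_smul ℝ _)
  · simp [grScale, hz K hK]

theorem grScale_eq_smul (c : Fin m → ℝ) {z : GrCoeff G m} {I : Finset (Fin m)}
    (hz : ∀ K, K ≠ I → z K = 0) : grScale c z = (∏ j ∈ I, c j) • z := by
  funext K
  rcases eq_or_ne K I with rfl | hK
  · rfl
  · simp [grScale, hz K hK]

noncomputable def grScaleEquiv (c : Fin m → ℝ) (hc : ∀ j, c j ≠ 0) :
    GrCoeff G m ≃ₗ[ℝ] GrCoeff G m :=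
  LinearEquiv.piCongrRight fun I =>
    LinearEquiv.smulOfNeZero ℝ (G (Nat.bodd I.card)) (∏ j ∈ I, c j)
      (prod_ne_zero_iff.mpr fun j _ => hc j)

def grScaleCLM [∀ b, TopologicalSpace (G b)] [∀ b, ContinuousConstSMul ℝ (G b)]
    (c : Fin m → ℝ) : GrCoeff G m →L[ℝ] GrCoeff G m :=
  ContinuousLinearMap.pi fun I => (∏ j ∈ I, c j) • ContinuousLinearMap.proj I

end Grassmann

theorem grScale_iterDeriv_eq_smul {E F : Bool → Type}
    [∀ b, AddCommGroup (E b)] [∀ b, Module ℝ (E b)] [∀ b, TopologicalSpace (E b)]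
    [∀ b, ContinuousAdd (E b)] [∀ b, ContinuousSMul ℝ (E b)]
    [∀ b, AddCommGroup (F b)] [∀ b, Module ℝ (F b)] [∀ b, TopologicalSpace (F b)]
    [∀ b, ContinuousConstSMul ℝ (F b)] [∀ b, T2Space (F b)]
    {U : Set (E false)} (hU : IsOpen U) {f : GrCoeff E m → GrCoeff F m}
    (hnat : ∀ (c : Fin m → ℝ), ∀ z ∈ {z : GrCoeff E m | body z ∈ U},
      f (grScale c z) = grScale c (f z))
    {x : GrCoeff E m} (hx₀ : ∀ I : Finset (Fin m), I ≠ ∅ → x I = 0) (hx : body x ∈ U)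
    {N : ℕ} {I : Fin N → Finset (Fin m)} {y : Fin N → GrCoeff E m}
    (hy : ∀ (i : Fin N) (K : Finset (Fin m)), K ≠ I i → y i K = 0) {w : GrCoeff F m}
    (hw : IsIterDerivOn {z : GrCoeff E m | body z ∈ U} f N x y w)
    (c : Fin m → ℝ) (hc : ∀ j, c j ≠ 0) :
    grScale c w = (∏ i, ∏ j ∈ I i, c j) • w := by
  set V : Set (GrCoeff E m) := {z | body z ∈ U}
  have hxV : x ∈ V := hx
  have hV : ∀ z, grScaleEquiv c hc z ∈ V ↔ z ∈ V := fun z =>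
    Iff.of_eq (congrArg (· ∈ U) (body_grScale c z))
  have hmap := hw.map_linearEquiv (grScaleEquiv c hc) hV (grScaleCLM c) (hnat c) hxV
  have hscaled := hw.smul_directions (μ := fun i => ∏ j ∈ I i, c j)
    fun i => prod_ne_zero_iff.mpr fun j _ => hc j
  change IsIterDerivOn _ f N (grScale c x) (fun i => grScale c (y i)) (grScale c w) at hmap
  simp only [grScale_eq_self c hx₀, grScale_eq_smul c (hy _)] at hmap
  exact IsIterDerivOn.unique (hU.preimage continuous_body) hxV hmap hscaled

theorem stmt_14_general {E F : Bool → Type}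
    [∀ b, AddCommGroup (E b)] [∀ b, Module ℝ (E b)] [∀ b, TopologicalSpace (E b)]
    [∀ b, IsTopologicalAddGroup (E b)] [∀ b, ContinuousSMul ℝ (E b)]
    [∀ b, AddCommGroup (F b)] [∀ b, Module ℝ (F b)] [∀ b, TopologicalSpace (F b)]
    [∀ b, ContinuousSMul ℝ (F b)] [∀ b, T2Space (F b)]
    (U : Set (E false)) (hU : IsOpen U)
    (f : GrCoeff E m → GrCoeff F m)
    (hnat : ∀ (c : Fin m → ℝ), ∀ z ∈ {z : GrCoeff E m | body z ∈ U},
      f (grScale c z) = grScale c (f z))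
    -- a real point `x ∈ U_ℝ`:
    (x : GrCoeff E m) (hx₀ : ∀ I : Finset (Fin m), I ≠ ∅ → x I = 0) (hx : body x ∈ U)
    -- the arguments `y_i ∈ λ_{I_i} E_{|I_i| mod 2}`:
    (N : ℕ) (I : Fin N → Finset (Fin m)) (y : Fin N → GrCoeff E m)
    (hy : ∀ (i : Fin N) (K : Finset (Fin m)), K ≠ I i → y i K = 0) :
    ∀ w : GrCoeff F m,
      IsIterDerivOn {z : GrCoeff E m | body z ∈ U} f N x y w →
      (∀ K : Finset (Fin m), K ≠ Finset.univ.sup I → w K = 0) ∧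
      (¬ (∀ i j : Fin N, i ≠ j → Disjoint (I i) (I j)) → w = 0) := by
  intro w hw
  have hcount (K : Finset (Fin m)) (hK : w K ≠ 0) (a : Fin m) :
      #{i | a ∈ I i} = if a ∈ K then 1 else 0 :=
    card_filter_mem_eq_of_prod_eq (fun c hc => smul_left_injective ℝ hK
      (congrFun (grScale_iterDeriv_eq_smul hU hnat hx₀ hx hy hw c hc) K)) a
  refine ⟨fun K hK => ?_, fun hI => funext fun K => ?_⟩
  · by_contra hwK
    exact hK (eq_sup_of_card_filter_mem_eq (hcount K hwK))
  · by_contra hwK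
    exact hI (pairwise_disjoint_of_card_filter_mem_le_one fun a =>
      (hcount K hwK a).trans_le (by split_ifs <;> simp))

/-- Let `f : U → F̄` be a natural transformation (`U` an open
subfunctor of `Ē`) with each `f_Λ` smooth (Michal–Bastiani).  If `x ∈ U_ℝ` and
`y_i ∈ λ_{I_i} E_{|I_i| mod 2} ⊆ Ē_{Λ_m}` for nonempty `I₁,…,Iₙ ⊆ {1,…,m}`, then
`dⁿf_{Λ_m}(x)(y₁,…,yₙ)` lies in `λ_{I₁}⋯λ_{Iₙ} F_{ℓ mod 2}` where
`ℓ = |I₁ ∪ ⋯ ∪ Iₙ|` (i.e. it is supported on the single coordinate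
`I₁ ∪ ⋯ ∪ Iₙ`); moreover if the `I_i` are not pairwise disjoint then
`dⁿf_{Λ_m}(x)(y₁,…,yₙ) = 0`.  (Naturality is expressed through equivariance
under the diagonal even algebra endomorphisms `λ_i ↦ c_i λ_i` of `Λ_m`, which
are the morphisms used in the proof.) -/
theorem stmt_14 {E F : Bool → Type}
    [∀ b, AddCommGroup (E b)] [∀ b, Module ℝ (E b)] [∀ b, TopologicalSpace (E b)]
    [∀ b, IsTopologicalAddGroup (E b)] [∀ b, ContinuousSMul ℝ (E b)]
    [∀ b, T2Space (E b)] [∀ b, LocallyConvexSpace ℝ (E b)]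
    [∀ b, AddCommGroup (F b)] [∀ b, Module ℝ (F b)] [∀ b, TopologicalSpace (F b)]
    [∀ b, IsTopologicalAddGroup (F b)] [∀ b, ContinuousSMul ℝ (F b)]
    [∀ b, T2Space (F b)] [∀ b, LocallyConvexSpace ℝ (F b)]
    (U : Set (E false)) (hU : IsOpen U)
    (f : GrCoeff E m → GrCoeff F m)
    (hsmooth : IsSmoothOn (GrCoeff F m) (TVS.ofType (GrCoeff E m)) f
      {z : GrCoeff E m | body z ∈ U})
    (hnat : ∀ (c : Fin m → ℝ), ∀ z ∈ {z : GrCoeff E m | body z ∈ U},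
      f (grScale c z) = grScale c (f z))
    -- a real point `x ∈ U_ℝ`:
    (x : GrCoeff E m) (hx₀ : ∀ I : Finset (Fin m), I ≠ ∅ → x I = 0) (hx : body x ∈ U)
    -- the arguments `y_i ∈ λ_{I_i} E_{|I_i| mod 2}`:
    (N : ℕ) (I : Fin N → Finset (Fin m)) (hIne : ∀ i, (I i).Nonempty)
    (y : Fin N → GrCoeff E m)
    (hy : ∀ (i : Fin N) (K : Finset (Fin m)), K ≠ I i → y i K = 0) :
    ∀ w : GrCoeff F m,
      IsIterDerivOn {z : GrCoeff E m | body z ∈ U} f N x y w →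
      (∀ K : Finset (Fin m), K ≠ Finset.univ.sup I → w K = 0) ∧
      (¬ (∀ i j : Fin N, i ≠ j → Disjoint (I i) (I j)) → w = 0) :=
  stmt_14_general U hU f hnat x hx₀ hx N I y hy
end

section
/- Let (f_r)_r : U → V and (g_r)_r : V → W be skeletons of supersmooth morphisms between superdomains. Suppose f₁(x) : E₁ → F₁ is invertible for every x ∈ U_ℝ and f₀ : U_ℝ → V_ℝ is a diffeomorphism. Define g₀ := f₀⁻¹, g₁(x') := f₁(g₀(x'))⁻¹, and for n > 1 recursively gₙ(x')(v') := -Σ_{m,l<n, (α,β)∈I^n_{m,l}, σ∈Sₙ} (sgn σ)/(m! l! α! β!) d^m g_l(x')((f_α × f_β)(g₀(x'))(v^σ)) with v_i := g₁(x')(v'_i). Then ((g_r)_r ∘ (f_r)_r) is the identity skeleton (id, c_id, 0, 0, …), i.e. (g_r)_r is a left inverse of (f_r)_r. -/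
open Filter Topology Finset

/-- The components of a skeleton between `ℤ₂`-graded spaces: maps
`f_k : U_ℝ → Altᵏ(E₁; F_{k mod 2})`, in uncurried form. -/
abbrev Skel (E F : Bool → Type) : Type :=
  (k : ℕ) → E false → (Fin k → E true) → F (Nat.bodd k)

/-- `T` is multilinear and alternating in its `k` arguments. -/
def IsMultAlt {V W : Type} [AddCommGroup V] [Module ℝ V] [AddCommGroup W] [Module ℝ W]
    (k : ℕ) (T : (Fin k → V) → W) : Prop :=
  (∀ (v : Fin k → V) (i : Fin k) (a b : V),
    T (Function.update v i (a + b)) = T (Function.update v i a) + T (Function.update v i b)) ∧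
  (∀ (v : Fin k → V) (i : Fin k) (c : ℝ) (a : V),
    T (Function.update v i (c • a)) = c • T (Function.update v i a)) ∧
  (∀ (v : Fin k → V) (i j : Fin k), i ≠ j → v i = v j → T v = 0)

section BigSum

variable {E F G : Bool → Type}
  [∀ b, AddCommGroup (E b)] [∀ b, Module ℝ (E b)]
  [∀ b, AddCommGroup (F b)] [∀ b, Module ℝ (F b)]
  [∀ b, AddCommGroup (G b)] [∀ b, Module ℝ (G b)]

/-- The fundamental sum appearing in the composition formula for skeletons:
`Σ_{m<mB, l<lB; σ ∈ Sₙ; (α,β) ∈ I^n_{m,l}} (sgn σ)/(m! l! α! β!) ·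
  dᵐg_l(y₀)((ev_α × ev_β)(v^σ))`,
where `I^n_{m,l} = {(α,β) ∈ (2ℕ)^m × (2ℕ₀+1)^l : |α|+|β| = n}`,
`Dg l m` plays the role of `dᵐ g_l`, `ev k` plays the role of the skeleton
components `f_k` evaluated at the relevant base point, and the arguments of the
blocks are the consecutive slices of the permuted tuple `v^σ`. -/
noncomputable def bigSum
    (Dg : (l m : ℕ) → F false → (Fin m → F false) → (Fin l → F true) → G (Nat.bodd l))
    (y0 : F false)
    (ev : (k : ℕ) → (Fin k → E true) → F (Nat.bodd k))
    (n mB lB : ℕ) (v : Fin n → E true) : G (Nat.bodd n) :=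
  ∑ m ∈ Finset.range mB, ∑ l ∈ Finset.range lB,
  ∑ σ : Equiv.Perm (Fin n),
  ∑ ab ∈ Finset.HasAntidiagonal.antidiagonal n,
  ∑ α ∈ (Finset.Nat.antidiagonalTuple m ab.1).filter (fun α => ∀ i, Even (α i) ∧ α i ≠ 0),
  ∑ β ∈ (Finset.Nat.antidiagonalTuple l ab.2).filter (fun β => ∀ j, ¬ Even (β j)),
    if hpar : Nat.bodd l = Nat.bodd n then
      ((((Equiv.Perm.sign σ : ℤ) : ℝ)) /
        (((m.factorial * l.factorial * (∏ i, (α i).factorial) * ∏ j, (β j).factorial : ℕ)) : ℝ)) •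
      cast (congrArg G hpar)
        (Dg l m y0
          (fun i => if h : Nat.bodd (α i) = false then
              cast (congrArg F h)
                (ev (α i) (fun t =>
                  if h2 : (∑ i' ∈ Finset.univ.filter (fun i' => i' < i), α i') + (t : ℕ) < n then
                    v (σ ⟨_, h2⟩) else 0))
            else 0)
          (fun j => if h : Nat.bodd (β j) = true then
              cast (congrArg F h)
                (ev (β j) (fun t =>
                  if h2 : ab.1 + (∑ j' ∈ Finset.univ.filter (fun j' => j' < j), β j') + (t : ℕ) < n then
                    v (σ ⟨_, h2⟩) else 0))
            else 0))
    else 0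

end BigSum

/-! The recursion for `gₙ` is set up so that the composition formula cancels. In the `n`-th
component of `g ∘ f` at `x`, every term with `n < l + 2m` vanishes, since `I^n_{m,l}` is then
empty; this removes `m = n`, and `l = n` with `m > 0`. The term `(m, l) = (0, n)` equals
`gₙ(f₀ x)(f₁(x) v₁, …, f₁(x) vₙ)`: alternation turns the `n!` permuted summands into copies of
this value divided by `n!`. The terms with `m, l < n` are `-gₙ(f₀ x)(f₁(x) v)` by the recursion,
once `g₀(f₀ x) = x` and `g₁(f₀ x) ∘ f₁(x) = id` are substituted (for `n = 1` they vanish by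
parity). -/

namespace Finset.Nat

theorem filter_antidiagonalTuple_even_pos_eq_empty {m a : ℕ} (h : a < 2 * m) :
    (antidiagonalTuple m a).filter (fun α => ∀ i, Even (α i) ∧ α i ≠ 0) = ∅ := by
  refine filter_eq_empty_iff.mpr fun α hα hev => ?_
  rw [mem_antidiagonalTuple] at hα
  have : ∑ _i : Fin m, 2 ≤ ∑ i, α i := sum_le_sum fun i _ => by
    obtain ⟨⟨c, hc⟩, hne⟩ := hev i
    omega
  simp only [sum_const, card_univ, Fintype.card_fin, smul_eq_mul] at this
  omega

theorem filter_antidiagonalTuple_odd_eq_empty {l b : ℕ} (h : b < l) :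
    (antidiagonalTuple l b).filter (fun β => ∀ j, ¬ Even (β j)) = ∅ := by
  refine filter_eq_empty_iff.mpr fun β hβ hodd => ?_
  rw [mem_antidiagonalTuple] at hβ
  have : ∑ _j : Fin l, 1 ≤ ∑ j, β j :=
    sum_le_sum fun j _ => Nat.one_le_iff_ne_zero.mpr fun h0 => hodd j (h0 ▸ Even.zero)
  simp only [sum_const, card_univ, Fintype.card_fin, smul_eq_mul, mul_one] at this
  omega

theorem filter_antidiagonalTuple_odd_self (n : ℕ) :
    (antidiagonalTuple n n).filter (fun β => ∀ j, ¬ Even (β j)) = {fun _ => 1} := by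
  ext β
  simp only [mem_filter, mem_antidiagonalTuple, mem_singleton]
  constructor
  · rintro ⟨hsum, hodd⟩
    have hle : ∀ j ∈ univ, 1 ≤ β j :=
      fun j _ => Nat.one_le_iff_ne_zero.mpr fun h0 => hodd j (h0 ▸ Even.zero)
    have hsum' : ∑ _j : Fin n, 1 = ∑ j, β j := by simp [hsum]
    funext j
    exact ((sum_eq_sum_iff_of_le hle).mp hsum' j (mem_univ j)).symm
  · rintro rfl
    exact ⟨by simp, fun _ => Nat.not_even_one⟩

end Finset.Nat

namespace IsMultAlt

variable {V W : Type} [AddCommGroup V] [Module ℝ V] [AddCommGroup W] [Module ℝ W]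
  {k : ℕ} {T : (Fin k → V) → W}

noncomputable def toAlternatingMap (h : IsMultAlt k T) : V [⋀^Fin k]→ₗ[ℝ] W where
  toFun := T
  map_update_add' v i a b := by
    convert h.1 v i a b
  map_update_smul' v i c a := by
    convert h.2.1 v i c a
  map_eq_zero_of_eq' v i j hv hij := h.2.2 v i j hij hv

theorem map_perm (h : IsMultAlt k T) (v : Fin k → V) (σ : Equiv.Perm (Fin k)) :
    T (fun i => v (σ i)) = ((Equiv.Perm.sign σ : ℤ) : ℝ) • T v := by
  change h.toAlternatingMap (v ∘ σ) = ((Equiv.Perm.sign σ : ℤ) : ℝ) • h.toAlternatingMap v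
  simpa [Units.smul_def, Int.cast_smul_eq_zsmul] using h.toAlternatingMap.map_perm v σ

end IsMultAlt

section BigSumTerm

variable {E F G : Bool → Type} [∀ b, AddCommGroup (E b)] [∀ b, AddCommGroup (F b)]
  [∀ b, AddCommGroup (G b)] [∀ b, Module ℝ (G b)]
  (Dg : (l m : ℕ) → F false → (Fin m → F false) → (Fin l → F true) → G (Nat.bodd l))
  (y0 : F false) (ev : (k : ℕ) → (Fin k → E true) → F (Nat.bodd k))

noncomputable def bigSumTerm (n : ℕ) (v : Fin n → E true) (m l : ℕ) : G (Nat.bodd n) :=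
  ∑ σ : Equiv.Perm (Fin n),
  ∑ ab ∈ Finset.HasAntidiagonal.antidiagonal n,
  ∑ α ∈ (Finset.Nat.antidiagonalTuple m ab.1).filter (fun α => ∀ i, Even (α i) ∧ α i ≠ 0),
  ∑ β ∈ (Finset.Nat.antidiagonalTuple l ab.2).filter (fun β => ∀ j, ¬ Even (β j)),
    if hpar : Nat.bodd l = Nat.bodd n then
      ((((Equiv.Perm.sign σ : ℤ) : ℝ)) /
        (((m.factorial * l.factorial * (∏ i, (α i).factorial) * ∏ j, (β j).factorial : ℕ)) : ℝ)) •
      cast (congrArg G hpar)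
        (Dg l m y0
          (fun i => if h : Nat.bodd (α i) = false then
              cast (congrArg F h)
                (ev (α i) (fun t =>
                  if h2 : (∑ i' ∈ Finset.univ.filter (fun i' => i' < i), α i') + (t : ℕ) < n then
                    v (σ ⟨_, h2⟩) else 0))
            else 0)
          (fun j => if h : Nat.bodd (β j) = true then
              cast (congrArg F h)
                (ev (β j) (fun t =>
                  if h2 : ab.1 + (∑ j' ∈ Finset.univ.filter (fun j' => j' < j), β j') + (t : ℕ) < n then
                    v (σ ⟨_, h2⟩) else 0))
            else 0))
    else 0

theorem bigSum_eq_sum_bigSumTerm (n mB lB : ℕ) (v : Fin n → E true) :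
    bigSum Dg y0 ev n mB lB v =
      ∑ m ∈ range mB, ∑ l ∈ range lB, bigSumTerm Dg y0 ev n v m l := rfl

variable {Dg y0 ev}

theorem bigSumTerm_eq_zero_of_bodd_ne {n : ℕ} {v : Fin n → E true} {m l : ℕ}
    (h : Nat.bodd l ≠ Nat.bodd n) : bigSumTerm Dg y0 ev n v m l = 0 :=
  sum_eq_zero fun _ _ => sum_eq_zero fun _ _ => sum_eq_zero fun _ _ =>
    sum_eq_zero fun _ _ => dif_neg h

theorem bigSumTerm_eq_zero_of_lt {n : ℕ} {v : Fin n → E true} {m l : ℕ}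
    (h : n < l + 2 * m) : bigSumTerm Dg y0 ev n v m l = 0 := by
  refine sum_eq_zero fun σ _ => sum_eq_zero fun ab hab => ?_
  rw [HasAntidiagonal.mem_antidiagonal] at hab
  by_cases hα : ab.1 < 2 * m
  · rw [Nat.filter_antidiagonalTuple_even_pos_eq_empty hα, sum_empty]
  · refine sum_eq_zero fun α _ => ?_
    rw [Nat.filter_antidiagonalTuple_odd_eq_empty (by omega), sum_empty]

theorem bigSum_succ_succ {n : ℕ} (hn : 1 ≤ n) (v : Fin n → E true) :
    bigSum Dg y0 ev n (n + 1) (n + 1) v =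
      bigSum Dg y0 ev n n n v + bigSumTerm Dg y0 ev n v 0 n := by
  have hm_top : ∑ l ∈ range (n + 1), bigSumTerm Dg y0 ev n v n l = 0 :=
    sum_eq_zero fun l _ => bigSumTerm_eq_zero_of_lt (by omega)
  have hl_top : ∑ m ∈ range n, bigSumTerm Dg y0 ev n v m n = bigSumTerm Dg y0 ev n v 0 n :=
    sum_eq_single_of_mem 0 (mem_range.mpr hn) fun m _ hm =>
      bigSumTerm_eq_zero_of_lt (by omega)
  rw [bigSum_eq_sum_bigSumTerm, sum_range_succ, hm_top, add_zero]
  simp only [sum_range_succ _ n, sum_add_distrib, hl_top]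
  rfl

variable [∀ b, Module ℝ (F b)] in
theorem bigSumTerm_zero_self {n : ℕ} (v : Fin n → E true)
    {G0 : (Fin n → F true) → G (Nat.bodd n)} (hD0 : ∀ w vv, Dg n 0 y0 w vv = G0 vv)
    (halt : IsMultAlt n G0) {e1 : E true → F true}
    (he1 : ∀ w, e1 w = cast (congrArg F Nat.bodd_one) (ev 1 (fun _ => w))) :
    bigSumTerm Dg y0 ev n v 0 n = G0 (fun j => e1 (v j)) := by
  -- for `(α, β) = (∅, (1, …, 1))` the `j`-th block of `v^σ` is the single argument `v (σ j)`
  have hslice : ∀ (σ : Equiv.Perm (Fin n)) (j : Fin n) (t : Fin 1),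
      (if h : 0 + ∑ j' ∈ univ.filter (· < j), 1 + (t : ℕ) < n then v (σ ⟨_, h⟩) else 0) =
        v (σ j) := by
    intro σ j t
    have hj : 0 + ∑ j' ∈ univ.filter (· < j), 1 + (t : ℕ) = j := by
      simp [filter_gt_eq_Iio]
    simp only [hj, j.isLt, dite_true]
  calc bigSumTerm Dg y0 ev n v 0 n
      = ∑ σ : Equiv.Perm (Fin n), ((n.factorial : ℝ))⁻¹ • G0 (fun j => e1 (v j)) := by
        refine sum_congr rfl fun σ _ => ?_
        rw [sum_eq_single_of_mem ((0 : ℕ), n) (by simp) fun ab hab hne => ?_]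
        · rw [Nat.antidiagonalTuple_zero_zero, filter_singleton, if_pos finZeroElim,
            sum_singleton, Nat.filter_antidiagonalTuple_odd_self, sum_singleton, dif_pos rfl,
            cast_eq, hD0]
          simp only [dif_pos Nat.bodd_one, hslice, ← he1]
          rw [halt.map_perm (fun j => e1 (v j)) σ, smul_smul, div_mul_eq_mul_div, ← Int.cast_mul,
            ← Units.val_mul, Int.units_mul_self]
          simp
        · have hab1 : ab.1 ≠ 0 := fun h0 => hne (Prod.ext h0 (by simp at hab; omega))
          obtain ⟨k, hk⟩ := Nat.exists_eq_succ_of_ne_zero hab1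
          rw [hk, Nat.antidiagonalTuple_zero_succ, filter_empty, sum_empty]
    _ = G0 (fun j => e1 (v j)) := by
        rw [sum_const, card_univ, Fintype.card_perm, Fintype.card_fin,
          ← Nat.cast_smul_eq_nsmul ℝ, smul_smul, mul_inv_cancel₀ (by positivity), one_smul]

end BigSumTerm

theorem stmt_18_general {E F : Bool → Type}
    [∀ b, AddCommGroup (E b)] [∀ b, Module ℝ (E b)] [∀ b, TopologicalSpace (E b)]
    [∀ b, AddCommGroup (F b)] [∀ b, Module ℝ (F b)] [∀ b, TopologicalSpace (F b)]
    (U : Set (E false)) (V : Set (F false))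
    (f : Skel E F) (g : Skel F E)
    -- the skeleton components are alternating multilinear maps:
    (hgalt : ∀ (k : ℕ) (y : F false), y ∈ V → IsMultAlt k (g k y))
    -- notation for the lowest components:
    (f0fun : E false → F false)
    (g0fun : F false → E false)
    (f1fun : E false → E true → F true)
    (hf1 : ∀ x w, f1fun x w = cast (congrArg F Nat.bodd_one) (f 1 x (fun _ => w)))
    (g1fun : F false → F true → E true)
    (hg1 : ∀ y w, g1fun y w = cast (congrArg E Nat.bodd_one) (g 1 y (fun _ => w)))
    -- `f₀ : U_ℝ → V_ℝ` is a diffeomorphism with (smooth) inverse `g₀ := f₀⁻¹`: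
    (hf0V : ∀ x ∈ U, f0fun x ∈ V)
    (hinv1 : ∀ x ∈ U, g0fun (f0fun x) = x)
    -- `f₁(x)` is invertible for every `x ∈ U_ℝ`, with inverse `g₁ := f₁(g₀(·))⁻¹`:
    (hf1bij : ∀ x ∈ U, Function.Bijective (f1fun x))
    (hg1inv : ∀ y ∈ V, ∀ w : F true, f1fun (g0fun y) (g1fun y w) = w)
    -- the iterated derivatives `dᵐ g_l` of the components of `g`:
    (Dg : (l m : ℕ) → F false → (Fin m → F false) → (Fin l → F true) → E (Nat.bodd l))
    (hDg : ∀ (l m : ℕ) (y : F false) (w : Fin m → F false) (vv : Fin l → F true), y ∈ V →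
      IsIterDerivOn V (fun z => g l z vv) m y w (Dg l m y w vv))
    -- the recursive definition of `gₙ` for `n > 1`:
    (hgrec : ∀ (N : ℕ), 2 ≤ N → ∀ y ∈ V, ∀ v' : Fin N → F true,
      g N y v' =
        - bigSum Dg y (fun k vv => f k (g0fun y) vv) N N N (fun j => g1fun y (v' j))) :
    -- then `(g_r)_r ∘ (f_r)_r` (given by the composition formula, i.e. by `bigSum`
    -- with bounds `m, l ≤ n`) is the identity skeleton `(id, c_id, 0, 0, …)`:
    ∀ x ∈ U,
      (g0fun (f0fun x) = x) ∧
      (∀ v : Fin 1 → E true,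
        cast (congrArg E Nat.bodd_one)
          (bigSum Dg (f0fun x) (fun k vv => f k x vv) 1 2 2 v) = v 0) ∧
      (∀ (N : ℕ), 2 ≤ N → ∀ v : Fin N → E true,
        bigSum Dg (f0fun x) (fun k vv => f k x vv) N (N + 1) (N + 1) v = 0) := by
  intro x hx
  have hy : f0fun x ∈ V := hf0V x hx
  have hg1f1 : ∀ w, g1fun (f0fun x) (f1fun x w) = w := fun w =>
    (hf1bij x hx).1 (by simpa only [hinv1 x hx] using hg1inv _ hy (f1fun x w))
  have htop : ∀ n (v : Fin n → E true), bigSumTerm Dg (f0fun x) (fun k vv => f k x vv) n v 0 n =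
      g n (f0fun x) (fun j => f1fun x (v j)) := fun n v =>
    bigSumTerm_zero_self v (fun w vv => hDg n 0 _ w vv hy) (hgalt n _ hy) (hf1 x)
  refine ⟨hinv1 x hx, fun v => ?_, fun N hN v => ?_⟩
  · have hconst : (fun j : Fin 1 => f1fun x (v j)) = fun _ => f1fun x (v 0) :=
      funext fun j => by rw [Subsingleton.elim j 0]
    rw [bigSum_succ_succ (n := 1) le_rfl, bigSum_eq_sum_bigSumTerm, range_one, sum_singleton,
      sum_singleton, bigSumTerm_eq_zero_of_bodd_ne (by decide), zero_add, htop, hconst, ← hg1,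
      hg1f1]
  · rw [bigSum_succ_succ (by omega), htop, hgrec N hN _ hy, hinv1 x hx]
    simp only [hg1f1]
    exact add_neg_cancel _

/-- Let `(f_r)_r : U → V` and `(g_r)_r : V → W` be skeletons of
supersmooth morphisms between superdomains.  Suppose `f₁(x) : E₁ → F₁` is
invertible for every `x ∈ U_ℝ` and `f₀ : U_ℝ → V_ℝ` is a diffeomorphism.  Define
`g₀ := f₀⁻¹`, `g₁(x') := f₁(g₀(x'))⁻¹`, and for `n > 1` recursively
`gₙ(x')(v') := -Σ_{m,l<n,(α,β)∈I^n_{m,l},σ∈Sₙ} (sgn σ)/(m!l!α!β!)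
  dᵐg_l(x')((f_α × f_β)(g₀(x'))(v^σ))` with `vᵢ := g₁(x')(v'ᵢ)`.
Then `(g_r)_r ∘ (f_r)_r` is the identity skeleton `(id, c_id, 0, 0, …)`, i.e.
`(g_r)_r` is a left inverse of `(f_r)_r`. -/
theorem stmt_18 {E F : Bool → Type}
    [∀ b, AddCommGroup (E b)] [∀ b, Module ℝ (E b)] [∀ b, TopologicalSpace (E b)]
    [∀ b, IsTopologicalAddGroup (E b)] [∀ b, ContinuousSMul ℝ (E b)]
    [∀ b, T2Space (E b)] [∀ b, LocallyConvexSpace ℝ (E b)]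
    [∀ b, AddCommGroup (F b)] [∀ b, Module ℝ (F b)] [∀ b, TopologicalSpace (F b)]
    [∀ b, IsTopologicalAddGroup (F b)] [∀ b, ContinuousSMul ℝ (F b)]
    [∀ b, T2Space (F b)] [∀ b, LocallyConvexSpace ℝ (F b)]
    (U : Set (E false)) (V : Set (F false)) (hU : IsOpen U) (hV : IsOpen V)
    (f : Skel E F) (g : Skel F E)
    -- the skeleton components are alternating multilinear maps:
    (hfalt : ∀ (k : ℕ) (x : E false), x ∈ U → IsMultAlt k (f k x))
    (hgalt : ∀ (k : ℕ) (y : F false), y ∈ V → IsMultAlt k (g k y))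
    -- notation for the lowest components:
    (f0fun : E false → F false) (hf0 : ∀ x, f0fun x = cast (congrArg F Nat.bodd_zero) (f 0 x Fin.elim0))
    (g0fun : F false → E false) (hg0 : ∀ y, g0fun y = cast (congrArg E Nat.bodd_zero) (g 0 y Fin.elim0))
    (f1fun : E false → E true → F true)
    (hf1 : ∀ x w, f1fun x w = cast (congrArg F Nat.bodd_one) (f 1 x (fun _ => w)))
    (g1fun : F false → F true → E true)
    (hg1 : ∀ y w, g1fun y w = cast (congrArg E Nat.bodd_one) (g 1 y (fun _ => w)))
    -- `f₀ : U_ℝ → V_ℝ` is a diffeomorphism with (smooth) inverse `g₀ := f₀⁻¹`: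
    (hf0V : ∀ x ∈ U, f0fun x ∈ V) (hg0U : ∀ y ∈ V, g0fun y ∈ U)
    (hf0smooth : IsSmoothOn (F false) (TVS.ofType (E false)) f0fun U)
    (hg0smooth : IsSmoothOn (E false) (TVS.ofType (F false)) g0fun V)
    (hinv1 : ∀ x ∈ U, g0fun (f0fun x) = x) (hinv2 : ∀ y ∈ V, f0fun (g0fun y) = y)
    -- `f₁(x)` is invertible for every `x ∈ U_ℝ`, with inverse `g₁ := f₁(g₀(·))⁻¹`:
    (hf1bij : ∀ x ∈ U, Function.Bijective (f1fun x))
    (hg1inv : ∀ y ∈ V, ∀ w : F true, f1fun (g0fun y) (g1fun y w) = w)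
    -- the iterated derivatives `dᵐ g_l` of the components of `g`:
    (Dg : (l m : ℕ) → F false → (Fin m → F false) → (Fin l → F true) → E (Nat.bodd l))
    (hDg : ∀ (l m : ℕ) (y : F false) (w : Fin m → F false) (vv : Fin l → F true), y ∈ V →
      IsIterDerivOn V (fun z => g l z vv) m y w (Dg l m y w vv))
    -- the recursive definition of `gₙ` for `n > 1`:
    (hgrec : ∀ (N : ℕ), 2 ≤ N → ∀ y ∈ V, ∀ v' : Fin N → F true,
      g N y v' =
        - bigSum Dg y (fun k vv => f k (g0fun y) vv) N N N (fun j => g1fun y (v' j))) :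
    -- then `(g_r)_r ∘ (f_r)_r` (given by the composition formula, i.e. by `bigSum`
    -- with bounds `m, l ≤ n`) is the identity skeleton `(id, c_id, 0, 0, …)`:
    ∀ x ∈ U,
      (g0fun (f0fun x) = x) ∧
      (∀ v : Fin 1 → E true,
        cast (congrArg E Nat.bodd_one)
          (bigSum Dg (f0fun x) (fun k vv => f k x vv) 1 2 2 v) = v 0) ∧
      (∀ (N : ℕ), 2 ≤ N → ∀ v : Fin N → E true,
        bigSum Dg (f0fun x) (fun k vv => f k x vv) N (N + 1) (N + 1) v = 0) :=
  stmt_18_general U V f g hgalt f0fun g0fun f1fun hf1 g1fun hg1 hf0V hinv1 hf1bij hg1inv Dg hDg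
    hgrec
end
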